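/- arXiv:1709.06267 — 11 statements merged into one kernel-verified Lean document; each statement's English description precedes it below -/
import Mathlib

section
/- Let N ≥ 1 be an integer and l_1,…,l_N positive reals with l_1+…+l_N = 1. Let h : ℝ_t × ℝ²_{x,y} → ℝ and 𝐮_j : ℝ_t × ℝ²_{x,y} → ℝ² (j = 1,…,N) be continuously differentiable on an open set Ω, and set h_j := l_j h. Assume the total mass equation ∂_t h + Σ_{j=1}^N ∇_{x,y}·(h_j 𝐮_j) = 0 holds on Ω. Define G_{α+1/2} := Σ_{j=1}^α ( ∂_t h_j + ∇_{x,y}·(h_j 𝐮_j) ) for α = 0,…,N. Then on Ω, for every 1 ≤ α ≤ N: G_{α+1/2} = − Σ_{j=1}^N ( Σ_{p=1}^α l_p − 𝟙_{j ≤ α} ) ∇_{x,y}·(h_j 𝐮_j); in particular G_{1/2} = G_{N+1/2} = 0 and, for each α, ∂_t h_α + ∇_{x,y}·(h_α 𝐮_α) = G_{α+1/2} − G_{α−1/2}. -/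
open MeasureTheory

/-- Partial derivative in time `t` of a function of `(t, x, y)`. -/
noncomputable def pt (f : ℝ × ℝ × ℝ → ℝ) (q : ℝ × ℝ × ℝ) : ℝ :=
  deriv (fun s => f (s, q.2.1, q.2.2)) q.1

/-- Partial derivative in `x` of a function of `(t, x, y)`. -/
noncomputable def px (f : ℝ × ℝ × ℝ → ℝ) (q : ℝ × ℝ × ℝ) : ℝ :=
  deriv (fun s => f (q.1, s, q.2.2)) q.2.1

/-- Partial derivative in `y` of a function of `(t, x, y)`. -/
noncomputable def py (f : ℝ × ℝ × ℝ → ℝ) (q : ℝ × ℝ × ℝ) : ℝ :=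
  deriv (fun s => f (q.1, q.2.1, s)) q.2.2

/-- Horizontal divergence `∇_{x,y}·F` of a horizontal vector field. -/
noncomputable def hdiv (F : ℝ × ℝ × ℝ → ℝ × ℝ) (q : ℝ × ℝ × ℝ) : ℝ :=
  px (fun p => (F p).1) q + py (fun p => (F p).2) q

/-! Since `h_j = l_j h`, the time derivatives add up to `(∑_{p ≤ α} l_p) ∂_t h`; eliminating
`∂_t h` with the total mass equation gives the closed formula for `G_{α+1/2}`, which vanishes at
`α = N` because `∑ l_p = 1`. The layer equations are the telescoping of the partial sums. -/

open Finset

theorem pt_const_mul (c : ℝ) (f : ℝ × ℝ × ℝ → ℝ) (q : ℝ × ℝ × ℝ) :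
    pt (fun p => c * f p) q = c * pt f q :=
  deriv_const_mul_field _

theorem Finset.sum_Icc_eq_sum_Icc_ite {M : Type*} [AddCommMonoid M] (f : ℕ → M)
    {a α N : ℕ} (hαN : α ≤ N) :
    ∑ j ∈ Icc a α, f j = ∑ j ∈ Icc a N, if j ≤ α then f j else 0 := by
  rw [← sum_filter]
  congr 1
  ext j
  simp only [mem_filter, mem_Icc]
  omega

theorem Finset.sum_Icc_one_sub_sum_Icc_one_pred {M : Type*} [AddCommGroup M] (f : ℕ → M)
    {α : ℕ} (hα : 1 ≤ α) :
    ∑ j ∈ Icc 1 α, f j - ∑ j ∈ Icc 1 (α - 1), f j = f α := by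
  obtain ⟨β, rfl⟩ := Nat.exists_eq_add_of_le' hα
  rw [Nat.add_sub_cancel, sum_Icc_succ_top (by omega), add_sub_cancel_left]

theorem mul_neg_sum_Icc_add_sum_Icc (c : ℝ) (D : ℕ → ℝ) {α N : ℕ} (hαN : α ≤ N) :
    c * -∑ j ∈ Icc 1 N, D j + ∑ j ∈ Icc 1 α, D j =
      -∑ j ∈ Icc 1 N, (c - if j ≤ α then (1 : ℝ) else 0) * D j := by
  rw [sum_Icc_eq_sum_Icc_ite D hαN, mul_neg, mul_sum, ← sum_neg_distrib, ← sum_neg_distrib,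
    ← sum_add_distrib]
  refine sum_congr rfl fun j _ => ?_
  split_ifs <;> ring

theorem stmt0_general
    (N : ℕ)
    (l : ℕ → ℝ)
    (hlsum : ∑ j ∈ Finset.Icc 1 N, l j = 1)
    (Ω : Set (ℝ × ℝ × ℝ))
    (h : ℝ × ℝ × ℝ → ℝ)
    (u : ℕ → ℝ × ℝ × ℝ → ℝ × ℝ)
    (hlay : ℕ → ℝ × ℝ × ℝ → ℝ)
    (hlay_def : ∀ j q, hlay j q = l j * h q)
    (hmass : ∀ q ∈ Ω,
      pt h q + ∑ j ∈ Finset.Icc 1 N, hdiv (fun p => hlay j p • u j p) q = 0)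
    (G : ℕ → ℝ × ℝ × ℝ → ℝ)
    (hG : ∀ α q, G α q = ∑ j ∈ Finset.Icc 1 α,
        (pt (hlay j) q + hdiv (fun p => hlay j p • u j p) q)) :
    ∀ q ∈ Ω,
      (∀ α ∈ Finset.Icc 1 N,
        G α q = -∑ j ∈ Finset.Icc 1 N,
          ((∑ p ∈ Finset.Icc 1 α, l p) - (if j ≤ α then (1 : ℝ) else 0)) *
            hdiv (fun p => hlay j p • u j p) q) ∧
      G 0 q = 0 ∧ G N q = 0 ∧
      (∀ α ∈ Finset.Icc 1 N,
        pt (hlay α) q + hdiv (fun p => hlay α p • u α p) q = G α q - G (α - 1) q) := by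
  intro q hq
  have hG_split : ∀ α, G α q = (∑ p ∈ Icc 1 α, l p) * pt h q
      + ∑ j ∈ Icc 1 α, hdiv (fun p => hlay j p • u j p) q := fun α => by
    simp only [hG, sum_add_distrib, sum_mul, funext (hlay_def _), pt_const_mul]
  have hpt : pt h q = -∑ j ∈ Icc 1 N, hdiv (fun p => hlay j p • u j p) q :=
    eq_neg_of_add_eq_zero_left (hmass q hq)
  refine ⟨fun α hα => ?_, by simp [hG], ?_, fun α hα => ?_⟩
  · rw [hG_split, hpt]
    exact mul_neg_sum_Icc_add_sum_Icc _ _ (mem_Icc.1 hα).2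
  · rw [hG_split, hlsum, one_mul]
    exact hmass q hq
  · rw [hG, hG, sum_Icc_one_sub_sum_Icc_one_pred _ (mem_Icc.1 hα).1]

/-- the mass-exchange terms of the layer-averaged Euler system. -/
theorem stmt0
    (N : ℕ) (hN : 1 ≤ N)
    (l : ℕ → ℝ) (hl : ∀ j ∈ Finset.Icc 1 N, 0 < l j)
    (hlsum : ∑ j ∈ Finset.Icc 1 N, l j = 1)
    (Ω : Set (ℝ × ℝ × ℝ)) (hΩ : IsOpen Ω)
    (h : ℝ × ℝ × ℝ → ℝ) (hhC1 : ContDiffOn ℝ 1 h Ω)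
    (u : ℕ → ℝ × ℝ × ℝ → ℝ × ℝ)
    (huC1 : ∀ j ∈ Finset.Icc 1 N, ContDiffOn ℝ 1 (u j) Ω)
    (hlay : ℕ → ℝ × ℝ × ℝ → ℝ)
    (hlay_def : ∀ j q, hlay j q = l j * h q)
    (hmass : ∀ q ∈ Ω,
      pt h q + ∑ j ∈ Finset.Icc 1 N, hdiv (fun p => hlay j p • u j p) q = 0)
    (G : ℕ → ℝ × ℝ × ℝ → ℝ)
    (hG : ∀ α q, G α q = ∑ j ∈ Finset.Icc 1 α,
        (pt (hlay j) q + hdiv (fun p => hlay j p • u j p) q)) :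
    ∀ q ∈ Ω,
      (∀ α ∈ Finset.Icc 1 N,
        G α q = -∑ j ∈ Finset.Icc 1 N,
          ((∑ p ∈ Finset.Icc 1 α, l p) - (if j ≤ α then (1 : ℝ) else 0)) *
            hdiv (fun p => hlay j p • u j p) q) ∧
      G 0 q = 0 ∧ G N q = 0 ∧
      (∀ α ∈ Finset.Icc 1 N,
        pt (hlay α) q + hdiv (fun p => hlay α p • u α p) q = G α q - G (α - 1) q) :=
  stmt0_general N l hlsum Ω h u hlay hlay_def hmass G hG
end

section
/- Let N ≥ 1, l_1,…,l_N positive reals summing to 1, g > 0, z_b ∈ C¹(ℝ²), and let h and 𝐮_α = (u_α, v_α) (α = 1,…,N) be C¹ on an open set Ω ⊂ ℝ_t × ℝ²_{x,y}. Set h_α = l_α h, G_{α+1/2} = − Σ_{j=1}^N ( Σ_{p=1}^α l_p − 𝟙_{j ≤ α} ) ∇_{x,y}·(h_j 𝐮_j) for 0 ≤ α ≤ N (so G_{1/2} = G_{N+1/2} = 0), and define the upwinded interface velocities 𝐮_{α+1/2} := 𝐮_α if G_{α+1/2} ≤ 0 and 𝐮_{α+1} if G_{α+1/2} > 0, for 1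 ≤ α ≤ N−1. Assume on Ω the total mass equation ∂_t h + Σ_α ∇_{x,y}·(h_α 𝐮_α) = 0 and, for each α, the layer momentum equation ∂_t(h_α 𝐮_α) + ∇_{x,y}·(h_α 𝐮_α ⊗ 𝐮_α) + ∇_{x,y}((g/2) h h_α) = − g h_α ∇_{x,y} z_b + 𝐮_{α+1/2} G_{α+1/2} − 𝐮_{α−1/2} G_{α−1/2}. Then, with E_α := h_α|𝐮_α|²/2 + (g/2) h_α h + g h_α z_b, the global energy balance holds on Ω: ∂_t Σ_{α=1}^N E_α + ∇_{x,y}· Σ_{α=1}^N 𝐮_α ( E_α + (g/2) h_α h ) = − Σ_{α=1}^{N−1} (1/2) |𝐮_{α+1} − 𝐮_α|² |G_{α+1/2}|; in particular the right-hand side is nonpositive. -/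
open MeasureTheory

/-!
Multiplying the two momentum equations of layer `α` by the components of `𝐮_α`, and the layer
mass equation `l_α ∂_t h + ∇·(h_α 𝐮_α) = G_{α+1/2} - G_{α-1/2}` by `g (h + z_b) - |𝐮_α|² / 2`,
turns the energy balance of layer `α` into the exchange terms
`(𝐮_α · 𝐮_{α±1/2} - |𝐮_α|² / 2 + g (h + z_b)) G_{α±1/2}`. Summing over the layers telescopes, as
`G_{1/2} = G_{N+1/2} = 0`, and leaves at each inner interface the factor
`𝐮_α · 𝐮_{α+1/2} - |𝐮_α|² / 2 - 𝐮_{α+1} · 𝐮_{α+1/2} + |𝐮_{α+1}|² / 2` times `G_{α+1/2}`; for the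
upwind choice of `𝐮_{α+1/2}` this is `-|𝐮_{α+1} - 𝐮_α|² |G_{α+1/2}| / 2`.
-/

open Finset

section Linearity

variable {ι : Type*} {s : Finset ι} {q : ℝ × ℝ × ℝ}

lemma pt_sum {f : ι → ℝ × ℝ × ℝ → ℝ} (hf : ∀ i ∈ s, DifferentiableAt ℝ (f i) q) :
    pt (fun p => ∑ i ∈ s, f i p) q = ∑ i ∈ s, pt (f i) q :=
  deriv_fun_sum fun i hi => by have := hf i hi; fun_prop

lemma px_sum {f : ι → ℝ × ℝ × ℝ → ℝ} (hf : ∀ i ∈ s, DifferentiableAt ℝ (f i) q) :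
    px (fun p => ∑ i ∈ s, f i p) q = ∑ i ∈ s, px (f i) q :=
  deriv_fun_sum fun i hi => by have := hf i hi; fun_prop

lemma py_sum {f : ι → ℝ × ℝ × ℝ → ℝ} (hf : ∀ i ∈ s, DifferentiableAt ℝ (f i) q) :
    py (fun p => ∑ i ∈ s, f i p) q = ∑ i ∈ s, py (f i) q :=
  deriv_fun_sum fun i hi => by have := hf i hi; fun_prop

lemma hdiv_sum {F : ι → ℝ × ℝ × ℝ → ℝ × ℝ} (hF : ∀ i ∈ s, DifferentiableAt ℝ (F i) q) :
    hdiv (fun p => ∑ i ∈ s, F i p) q = ∑ i ∈ s, hdiv (F i) q := by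
  simp only [hdiv, Prod.fst_sum, Prod.snd_sum]
  rw [px_sum fun i hi => (hF i hi).fst, py_sum fun i hi => (hF i hi).snd, sum_add_distrib]

end Linearity

/-- `interfaceFlux N l D α` is `G_{α+1/2}` when `D j = ∇·(h_j 𝐮_j)`. -/
def interfaceFlux (N : ℕ) (l D : ℕ → ℝ) (α : ℕ) : ℝ :=
  -∑ j ∈ Icc 1 N, ((∑ p ∈ Icc 1 α, l p) - (if j ≤ α then (1 : ℝ) else 0)) * D j

lemma interfaceFlux_zero (N : ℕ) (l D : ℕ → ℝ) : interfaceFlux N l D 0 = 0 := by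
  simp [interfaceFlux]

lemma interfaceFlux_self_of_sum_eq_one {N : ℕ} {l : ℕ → ℝ} (hl : ∑ j ∈ Icc 1 N, l j = 1)
    (D : ℕ → ℝ) : interfaceFlux N l D N = 0 := by
  rw [interfaceFlux, hl, neg_eq_zero]
  exact sum_eq_zero fun j hj => by rw [if_pos (mem_Icc.mp hj).2, sub_self, zero_mul]

lemma interfaceFlux_sub_pred {N α : ℕ} (hα : α ∈ Icc 1 N) (l D : ℕ → ℝ) :
    interfaceFlux N l D α - interfaceFlux N l D (α - 1) = D α - l α * ∑ j ∈ Icc 1 N, D j := by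
  obtain ⟨β, rfl⟩ : ∃ β, α = β + 1 := ⟨α - 1, by grind⟩
  simp only [interfaceFlux, Nat.add_sub_cancel, sum_Icc_succ_top (Nat.le_add_left 1 β)]
  calc _ = ∑ j ∈ Icc 1 N, ((if β + 1 = j then D j else 0) - l (β + 1) * D j) := by
        rw [neg_sub_neg, ← sum_sub_distrib]
        exact sum_congr rfl fun j _ => by split_ifs <;> first | omega | ring
    _ = _ := by rw [sum_sub_distrib, sum_ite_eq, if_pos hα, mul_sum]

lemma sum_Icc_mul_sub_mul_pred (M : ℕ) (A B G : ℕ → ℝ) :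
    ∑ α ∈ Icc 1 (M + 1), (A α * G α - B α * G (α - 1))
      = ∑ α ∈ Icc 1 M, (A α - B (α + 1)) * G α + A (M + 1) * G (M + 1) - B 1 * G 0 := by
  induction M with
  | zero => simp
  | succ M ih =>
    rw [sum_Icc_succ_top (by omega), ih, sum_Icc_succ_top (by omega), Nat.add_sub_cancel]
    ring

lemma sum_Icc_mul_sub_mul_pred_of_eq_zero {N : ℕ} {A B G : ℕ → ℝ} (h0 : G 0 = 0)
    (hN : G N = 0) :
    ∑ α ∈ Icc 1 N, (A α * G α - B α * G (α - 1))
      = ∑ α ∈ Icc 1 (N - 1), (A α - B (α + 1)) * G α := by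
  cases N with
  | zero => simp
  | succ M => rw [sum_Icc_mul_sub_mul_pred, h0, hN, Nat.add_sub_cancel]; ring

lemma upwind_exchange {a b c : ℝ × ℝ} {G : ℝ} (hc : c = if G ≤ 0 then a else b) :
    (a.1 * c.1 + a.2 * c.2 - (a.1 ^ 2 + a.2 ^ 2) / 2
      - (b.1 * c.1 + b.2 * c.2 - (b.1 ^ 2 + b.2 ^ 2) / 2)) * G
      = -(1 / 2 * ((b.1 - a.1) ^ 2 + (b.2 - a.2) ^ 2) * |G|) := by
  split_ifs at hc with hG
  · rw [hc, abs_of_nonpos hG]; ring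
  · rw [hc, abs_of_pos (not_le.mp hG)]; ring

lemma layer_energy_balance {g la GA GB : ℝ} {UA UB : ℝ × ℝ} {zb : ℝ × ℝ → ℝ}
    {h : ℝ × ℝ × ℝ → ℝ} {w : ℝ × ℝ × ℝ → ℝ × ℝ} {q : ℝ × ℝ × ℝ}
    (hh : DifferentiableAt ℝ h q) (hw : DifferentiableAt ℝ w q)
    (hz : DifferentiableAt ℝ zb (q.2.1, q.2.2))
    (mass : la * pt h q + hdiv (fun p => (la * h p) • w p) q = GA - GB)
    (momx : pt (fun p => la * h p * (w p).1) q
        + px (fun p => la * h p * (w p).1 * (w p).1) q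
        + py (fun p => la * h p * (w p).2 * (w p).1) q
        + px (fun p => g / 2 * h p * (la * h p)) q
      = -(g * (la * h q) * px (fun p => zb (p.2.1, p.2.2)) q) + UA.1 * GA - UB.1 * GB)
    (momy : pt (fun p => la * h p * (w p).2) q
        + px (fun p => la * h p * (w p).1 * (w p).2) q
        + py (fun p => la * h p * (w p).2 * (w p).2) q
        + py (fun p => g / 2 * h p * (la * h p)) q
      = -(g * (la * h q) * py (fun p => zb (p.2.1, p.2.2)) q) + UA.2 * GA - UB.2 * GB) :
    pt (fun p => la * h p * ((w p).1 ^ 2 + (w p).2 ^ 2) / 2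
        + g / 2 * (la * h p) * h p + g * (la * h p) * zb (p.2.1, p.2.2)) q
      + hdiv (fun p => (la * h p * ((w p).1 ^ 2 + (w p).2 ^ 2) / 2
        + g / 2 * (la * h p) * h p + g * (la * h p) * zb (p.2.1, p.2.2)
        + g / 2 * (la * h p) * h p) • w p) q
    = ((w q).1 * UA.1 + (w q).2 * UA.2 - ((w q).1 ^ 2 + (w q).2 ^ 2) / 2
        + g * (h q + zb (q.2.1, q.2.2))) * GA
      - ((w q).1 * UB.1 + (w q).2 * UB.2 - ((w q).1 ^ 2 + (w q).2 ^ 2) / 2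
        + g * (h q + zb (q.2.1, q.2.2))) * GB := by
  obtain ⟨t, x, y⟩ := q
  simp only [hdiv, Prod.smul_fst, Prod.smul_snd, smul_eq_mul] at mass ⊢
  simp (disch := fun_prop) only [pt, px, py, deriv_fun_mul, deriv_fun_add, deriv_fun_pow,
    deriv_div_const, deriv_const] at mass momx momy ⊢
  linear_combination (w (t, x, y)).1 * momx + (w (t, x, y)).2 * momy
    + (g * (h (t, x, y) + zb (x, y)) - ((w (t, x, y)).1 ^ 2 + (w (t, x, y)).2 ^ 2) / 2) * mass

theorem stmt1_general
    (N : ℕ) (g : ℝ)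
    (l : ℕ → ℝ)
    (hlsum : ∑ j ∈ Finset.Icc 1 N, l j = 1)
    (zb : ℝ × ℝ → ℝ) (hzbC1 : ContDiff ℝ 1 zb)
    (Ω : Set (ℝ × ℝ × ℝ)) (hΩ : IsOpen Ω)
    (h : ℝ × ℝ × ℝ → ℝ) (hhC1 : ContDiffOn ℝ 1 h Ω)
    (u : ℕ → ℝ × ℝ × ℝ → ℝ × ℝ)
    (huC1 : ∀ j ∈ Finset.Icc 1 N, ContDiffOn ℝ 1 (u j) Ω)
    (hlay : ℕ → ℝ × ℝ × ℝ → ℝ)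
    (hlay_def : ∀ j q, hlay j q = l j * h q)
    (G : ℕ → ℝ × ℝ × ℝ → ℝ)
    (hG : ∀ α q, G α q = -∑ j ∈ Finset.Icc 1 N,
        ((∑ p ∈ Finset.Icc 1 α, l p) - (if j ≤ α then (1 : ℝ) else 0)) *
          hdiv (fun p => hlay j p • u j p) q)
    (uh : ℕ → ℝ × ℝ × ℝ → ℝ × ℝ)
    (huh : ∀ α ∈ Finset.Icc 1 (N - 1), ∀ q,
      uh α q = if G α q ≤ 0 then u α q else u (α + 1) q)
    (hmass : ∀ q ∈ Ω,
      pt h q + ∑ j ∈ Finset.Icc 1 N, hdiv (fun p => hlay j p • u j p) q = 0)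
    (hmom1 : ∀ α ∈ Finset.Icc 1 N, ∀ q ∈ Ω,
      pt (fun p => hlay α p * (u α p).1) q
        + px (fun p => hlay α p * (u α p).1 * (u α p).1) q
        + py (fun p => hlay α p * (u α p).2 * (u α p).1) q
        + px (fun p => g / 2 * h p * hlay α p) q
      = -(g * hlay α q * px (fun p => zb (p.2.1, p.2.2)) q)
        + (uh α q).1 * G α q - (uh (α - 1) q).1 * G (α - 1) q)
    (hmom2 : ∀ α ∈ Finset.Icc 1 N, ∀ q ∈ Ω,
      pt (fun p => hlay α p * (u α p).2) q
        + px (fun p => hlay α p * (u α p).1 * (u α p).2) q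
        + py (fun p => hlay α p * (u α p).2 * (u α p).2) q
        + py (fun p => g / 2 * h p * hlay α p) q
      = -(g * hlay α q * py (fun p => zb (p.2.1, p.2.2)) q)
        + (uh α q).2 * G α q - (uh (α - 1) q).2 * G (α - 1) q)
    (E : ℕ → ℝ × ℝ × ℝ → ℝ)
    (hE : ∀ α q, E α q = hlay α q * ((u α q).1 ^ 2 + (u α q).2 ^ 2) / 2
        + g / 2 * hlay α q * h q + g * hlay α q * zb (q.2.1, q.2.2)) :
    ∀ q ∈ Ω,
      pt (fun p => ∑ α ∈ Finset.Icc 1 N, E α p) q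
        + hdiv (fun p => ∑ α ∈ Finset.Icc 1 N,
            (E α p + g / 2 * hlay α p * h p) • u α p) q
      = -∑ α ∈ Finset.Icc 1 (N - 1),
          (1 / 2) * (((u (α + 1) q).1 - (u α q).1) ^ 2
            + ((u (α + 1) q).2 - (u α q).2) ^ 2) * |G α q| := by
  intro q hq
  obtain rfl : hlay = fun j p => l j * h p := funext₂ hlay_def
  obtain rfl : E = fun α p => l α * h p * ((u α p).1 ^ 2 + (u α p).2 ^ 2) / 2
      + g / 2 * (l α * h p) * h p + g * (l α * h p) * zb (p.2.1, p.2.2) := funext₂ hE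
  beta_reduce at *
  have hΩq : Ω ∈ nhds q := hΩ.mem_nhds hq
  have hh : DifferentiableAt ℝ h q := (hhC1.differentiableOn one_ne_zero).differentiableAt hΩq
  have hu : ∀ α ∈ Icc 1 N, DifferentiableAt ℝ (u α) q := fun α hα =>
    ((huC1 α hα).differentiableOn one_ne_zero).differentiableAt hΩq
  have hz : Differentiable ℝ zb := hzbC1.differentiable one_ne_zero
  set D : ℕ → ℝ := fun j => hdiv (fun p => (l j * h p) • u j p) q
  have hGq : ∀ α, G α q = interfaceFlux N l D α := fun α => hG α q
  have hmass_q : pt h q + ∑ j ∈ Icc 1 N, D j = 0 := hmass q hq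
  have hlayer_mass : ∀ α ∈ Icc 1 N, l α * pt h q + D α = G α q - G (α - 1) q := fun α hα => by
    rw [hGq, hGq, interfaceFlux_sub_pred hα]
    linear_combination l α * hmass_q
  rw [pt_sum fun α hα => by have := hu α hα; fun_prop,
    hdiv_sum fun α hα => by have := hu α hα; fun_prop, ← sum_add_distrib,
    sum_congr rfl fun α hα => layer_energy_balance hh (hu α hα) (hz _) (hlayer_mass α hα)
      (hmom1 α hα q hq) (hmom2 α hα q hq),
    sum_Icc_mul_sub_mul_pred_of_eq_zero ((hGq 0).trans (interfaceFlux_zero N l D))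
      ((hGq N).trans (interfaceFlux_self_of_sum_eq_one hlsum D)), ← sum_neg_distrib]
  refine sum_congr rfl fun α hα => ?_
  rw [Nat.add_sub_cancel]
  linear_combination upwind_exchange (huh α hα q)

/-- global energy balance of the layer-averaged hydrostatic Euler
system with the upwinded interface velocities. -/
theorem stmt1
    (N : ℕ) (hN : 1 ≤ N) (g : ℝ) (hg : 0 < g)
    (l : ℕ → ℝ) (hl : ∀ j ∈ Finset.Icc 1 N, 0 < l j)
    (hlsum : ∑ j ∈ Finset.Icc 1 N, l j = 1)
    (zb : ℝ × ℝ → ℝ) (hzbC1 : ContDiff ℝ 1 zb)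
    (Ω : Set (ℝ × ℝ × ℝ)) (hΩ : IsOpen Ω)
    (h : ℝ × ℝ × ℝ → ℝ) (hhC1 : ContDiffOn ℝ 1 h Ω)
    (u : ℕ → ℝ × ℝ × ℝ → ℝ × ℝ)
    (huC1 : ∀ j ∈ Finset.Icc 1 N, ContDiffOn ℝ 1 (u j) Ω)
    (hlay : ℕ → ℝ × ℝ × ℝ → ℝ)
    (hlay_def : ∀ j q, hlay j q = l j * h q)
    (G : ℕ → ℝ × ℝ × ℝ → ℝ)
    (hG : ∀ α q, G α q = -∑ j ∈ Finset.Icc 1 N,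
        ((∑ p ∈ Finset.Icc 1 α, l p) - (if j ≤ α then (1 : ℝ) else 0)) *
          hdiv (fun p => hlay j p • u j p) q)
    (uh : ℕ → ℝ × ℝ × ℝ → ℝ × ℝ)
    (huh : ∀ α ∈ Finset.Icc 1 (N - 1), ∀ q,
      uh α q = if G α q ≤ 0 then u α q else u (α + 1) q)
    (hmass : ∀ q ∈ Ω,
      pt h q + ∑ j ∈ Finset.Icc 1 N, hdiv (fun p => hlay j p • u j p) q = 0)
    (hmom1 : ∀ α ∈ Finset.Icc 1 N, ∀ q ∈ Ω,
      pt (fun p => hlay α p * (u α p).1) q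
        + px (fun p => hlay α p * (u α p).1 * (u α p).1) q
        + py (fun p => hlay α p * (u α p).2 * (u α p).1) q
        + px (fun p => g / 2 * h p * hlay α p) q
      = -(g * hlay α q * px (fun p => zb (p.2.1, p.2.2)) q)
        + (uh α q).1 * G α q - (uh (α - 1) q).1 * G (α - 1) q)
    (hmom2 : ∀ α ∈ Finset.Icc 1 N, ∀ q ∈ Ω,
      pt (fun p => hlay α p * (u α p).2) q
        + px (fun p => hlay α p * (u α p).1 * (u α p).2) q
        + py (fun p => hlay α p * (u α p).2 * (u α p).2) q
        + py (fun p => g / 2 * h p * hlay α p) q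
      = -(g * hlay α q * py (fun p => zb (p.2.1, p.2.2)) q)
        + (uh α q).2 * G α q - (uh (α - 1) q).2 * G (α - 1) q)
    (E : ℕ → ℝ × ℝ × ℝ → ℝ)
    (hE : ∀ α q, E α q = hlay α q * ((u α q).1 ^ 2 + (u α q).2 ^ 2) / 2
        + g / 2 * hlay α q * h q + g * hlay α q * zb (q.2.1, q.2.2)) :
    ∀ q ∈ Ω,
      pt (fun p => ∑ α ∈ Finset.Icc 1 N, E α p) q
        + hdiv (fun p => ∑ α ∈ Finset.Icc 1 N,
            (E α p + g / 2 * hlay α p * h p) • u α p) q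
      = -∑ α ∈ Finset.Icc 1 (N - 1),
          (1 / 2) * (((u (α + 1) q).1 - (u α q).1) ^ 2
            + ((u (α + 1) q).2 - (u α q).2) ^ 2) * |G α q| :=
  stmt1_general N g l hlsum zb hzbC1 Ω hΩ h hhC1 u huC1 hlay hlay_def G hG uh huh hmass hmom1 hmom2
    E hE
end

section
/- Let N ≥ 1, let z_b ∈ C¹(ℝ²), let h_1,…,h_N : ℝ² → ℝ be C¹ and positive, and let 𝐮_1,…,𝐮_N : ℝ² → ℝ² be C¹. Set z_{α+1/2} := z_b + Σ_{j=1}^α h_j (α = 0,…,N) and z_α := z_{α−1/2} + h_α/2. For z with z_{α−1/2}(x,y) ≤ z ≤ z_{α+1/2}(x,y), define the vertical velocity w(x,y,z) := − ∇_{x,y}·( Σ_{j=1}^{α−1} h_j 𝐮_j + (z − z_{α−1/2}) 𝐮_α ) (the horizontal divergence being taken at fixed z), and define the layer average w_α(x,y) := (1/h_α) ∫_{z_{α−1/2}}^{z_{α+1/2}} w(x,y,z) dz. Then w_α = k_α − z_α ∇_{x,y}·𝐮_α for every α = 1,…,N, where k_1 := ∇_{x,y}·(z_b 𝐮_1) and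 k_{α+1} := k_α + ∇_{x,y}·( z_{α+1/2}(𝐮_{α+1} − 𝐮_α) ). -/
/-
In layer `α` the flux `∫_{z_b}^z 𝐮 dz'` equals `z 𝐮_α - T_α`, where
`T_α := z_{α-1/2} 𝐮_α - ∑_{j<α} h_j 𝐮_j` does not depend on `z`. Hence
`w = ∇·T_α - z ∇·𝐮_α` is affine in `z`, and its average over the layer is its value at the
midheight `z_α`. Moreover `T_1 = z_b 𝐮_1` and `T_{α+1} = T_α + z_{α+1/2} (𝐮_{α+1} - 𝐮_α)`
pointwise (because `z_{α+1/2} = z_{α-1/2} + h_α`), so `k_α = ∇·T_α` by induction, using only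
the linearity of the divergence on differentiable fields.
-/

open MeasureTheory

/-- Partial derivative in `x` of a function of `(x, y)`. -/
noncomputable def dx2 (f : ℝ × ℝ → ℝ) (q : ℝ × ℝ) : ℝ :=
  deriv (fun s => f (s, q.2)) q.1

/-- Partial derivative in `y` of a function of `(x, y)`. -/
noncomputable def dy2 (f : ℝ × ℝ → ℝ) (q : ℝ × ℝ) : ℝ :=
  deriv (fun s => f (q.1, s)) q.2

/-- Horizontal divergence `∇_{x,y}·F` of a horizontal vector field on `ℝ²`. -/
noncomputable def div2 (F : ℝ × ℝ → ℝ × ℝ) (q : ℝ × ℝ) : ℝ :=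
  dx2 (fun p => (F p).1) q + dy2 (fun p => (F p).2) q

section Divergence

variable {F G : ℝ × ℝ → ℝ × ℝ} {q : ℝ × ℝ}

theorem div2_eq_fderiv (hF : DifferentiableAt ℝ F q) :
    div2 F q = (fderiv ℝ F q (1, 0)).1 + (fderiv ℝ F q (0, 1)).2 := by
  have hx := hF.hasFDerivAt.fst.comp_hasDerivAt_of_eq q.1
    ((hasDerivAt_id q.1).prodMk (hasDerivAt_const q.1 q.2)) rfl
  have hy := hF.hasFDerivAt.snd.comp_hasDerivAt_of_eq q.2
    ((hasDerivAt_const q.2 q.1).prodMk (hasDerivAt_id q.2)) rfl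
  exact congrArg₂ (· + ·) hx.deriv hy.deriv

theorem div2_add (hF : DifferentiableAt ℝ F q) (hG : DifferentiableAt ℝ G q) :
    div2 (fun p => F p + G p) q = div2 F q + div2 G q := by
  rw [div2_eq_fderiv (hF.fun_add hG), div2_eq_fderiv hF, div2_eq_fderiv hG, fderiv_fun_add hF hG]
  simp only [add_apply, Prod.fst_add, Prod.snd_add]
  ring

theorem div2_sub (hF : DifferentiableAt ℝ F q) (hG : DifferentiableAt ℝ G q) :
    div2 (fun p => F p - G p) q = div2 F q - div2 G q := by
  rw [div2_eq_fderiv (hF.fun_sub hG), div2_eq_fderiv hF, div2_eq_fderiv hG, fderiv_fun_sub hF hG]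
  simp only [sub_apply, Prod.fst_sub, Prod.snd_sub]
  ring

theorem div2_const_smul (hF : DifferentiableAt ℝ F q) (c : ℝ) :
    div2 (fun p => c • F p) q = c * div2 F q := by
  rw [div2_eq_fderiv (hF.fun_const_smul c), div2_eq_fderiv hF, fderiv_fun_const_smul hF]
  simp only [smul_apply, Prod.smul_fst, Prod.smul_snd, smul_eq_mul]
  ring

end Divergence

theorem one_div_mul_integral_const_sub_mul {h : ℝ} (hh : h ≠ 0) (a C D : ℝ) :
    1 / h * ∫ z in a..a + h, (C - z * D) = C - (a + h / 2) * D := by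
  rw [intervalIntegral.integral_sub intervalIntegrable_const
      ((continuous_mul_const D).intervalIntegrable _ _),
    intervalIntegral.integral_mul_const, intervalIntegral.integral_const, integral_id,
    smul_eq_mul]
  field_simp
  ring

section Layers

variable (zb : ℝ × ℝ → ℝ) (h : ℕ → ℝ × ℝ → ℝ) (u : ℕ → ℝ × ℝ → ℝ × ℝ)

-- `z_{α+1/2}`
def interfaceHeight (α : ℕ) (p : ℝ × ℝ) : ℝ :=
  zb p + ∑ j ∈ Finset.Icc 1 α, h j p

-- `∫_{z_b}^z 𝐮 dz'` for `z` in layer `α`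
def fluxBelow (α : ℕ) (z : ℝ) (p : ℝ × ℝ) : ℝ × ℝ :=
  (∑ j ∈ Finset.Icc 1 (α - 1), h j p • u j p) + (z - interfaceHeight zb h (α - 1) p) • u α p

-- `T_α`
def offsetFlux (α : ℕ) (p : ℝ × ℝ) : ℝ × ℝ :=
  interfaceHeight zb h (α - 1) p • u α p - ∑ j ∈ Finset.Icc 1 (α - 1), h j p • u j p

variable {zb h u}

theorem interfaceHeight_succ (α : ℕ) (p : ℝ × ℝ) :
    interfaceHeight zb h (α + 1) p = interfaceHeight zb h α p + h (α + 1) p := by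
  simp only [interfaceHeight, Finset.sum_Icc_succ_top (Nat.le_add_left 1 α)]
  ring

theorem fluxBelow_eq (α : ℕ) (z : ℝ) (p : ℝ × ℝ) :
    fluxBelow zb h u α z p = z • u α p - offsetFlux zb h u α p := by
  simp only [fluxBelow, offsetFlux, sub_smul]
  abel

theorem offsetFlux_one : offsetFlux zb h u 1 = fun p => zb p • u 1 p := by
  funext p
  simp [offsetFlux, interfaceHeight]

theorem offsetFlux_succ {α : ℕ} (hα : 1 ≤ α) :
    offsetFlux zb h u (α + 1)
      = fun p => offsetFlux zb h u α p + interfaceHeight zb h α p • (u (α + 1) p - u α p) := by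
  obtain ⟨m, rfl⟩ := Nat.exists_eq_add_of_le' hα
  funext p
  simp only [offsetFlux, add_tsub_cancel_right, Finset.sum_Icc_succ_top (Nat.le_add_left 1 m),
    interfaceHeight_succ]
  module

theorem differentiable_interfaceHeight (hzb : Differentiable ℝ zb) {α : ℕ}
    (hh : ∀ j ∈ Finset.Icc 1 α, Differentiable ℝ (h j)) :
    Differentiable ℝ (interfaceHeight zb h α) :=
  hzb.add (Differentiable.fun_sum hh)

theorem differentiable_offsetFlux (hzb : Differentiable ℝ zb) {α : ℕ} (hα : 1 ≤ α)
    (hh : ∀ j ∈ Finset.Icc 1 (α - 1), Differentiable ℝ (h j))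
    (hu : ∀ j ∈ Finset.Icc 1 α, Differentiable ℝ (u j)) :
    Differentiable ℝ (offsetFlux zb h u α) :=
  ((differentiable_interfaceHeight hzb hh).smul (hu α (by simpa using hα))).sub <|
    Differentiable.fun_sum fun j hj =>
      (hh j hj).smul (hu j (Finset.Icc_subset_Icc_right (Nat.sub_le α 1) hj))

theorem div2_fluxBelow (hzb : Differentiable ℝ zb) {α : ℕ} (hα : 1 ≤ α)
    (hh : ∀ j ∈ Finset.Icc 1 (α - 1), Differentiable ℝ (h j))
    (hu : ∀ j ∈ Finset.Icc 1 α, Differentiable ℝ (u j)) (z : ℝ) (q : ℝ × ℝ) :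
    div2 (fluxBelow zb h u α z) q = z * div2 (u α) q - div2 (offsetFlux zb h u α) q := by
  have huα : Differentiable ℝ (u α) := hu α (by simpa using hα)
  rw [funext (fluxBelow_eq (zb := zb) (h := h) (u := u) α z),
    div2_sub ((huα q).fun_const_smul z) (differentiable_offsetFlux hzb hα hh hu q),
    div2_const_smul (huα q)]

theorem eq_div2_offsetFlux {N : ℕ} {k : ℕ → ℝ × ℝ → ℝ} (hzb : Differentiable ℝ zb)
    (hh : ∀ j ∈ Finset.Icc 1 N, Differentiable ℝ (h j))
    (hu : ∀ j ∈ Finset.Icc 1 N, Differentiable ℝ (u j))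
    (hk1 : ∀ q, k 1 q = div2 (fun p => zb p • u 1 p) q)
    (hkrec : ∀ α ∈ Finset.Icc 1 (N - 1), ∀ q,
      k (α + 1) q = k α q + div2 (fun p => interfaceHeight zb h α p • (u (α + 1) p - u α p)) q)
    {α : ℕ} (hα1 : 1 ≤ α) (hαN : α ≤ N) :
    k α = div2 (offsetFlux zb h u α) := by
  induction α, hα1 using Nat.le_induction with
  | base => rw [offsetFlux_one]; exact funext hk1
  | succ n hn ih =>
    have hhn : ∀ j ∈ Finset.Icc 1 n, Differentiable ℝ (h j) :=
      fun j hj => hh j (Finset.Icc_subset_Icc_right (by omega) hj)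
    have hun : ∀ j ∈ Finset.Icc 1 (n + 1), Differentiable ℝ (u j) :=
      fun j hj => hu j (Finset.Icc_subset_Icc_right hαN hj)
    have hT := differentiable_offsetFlux hzb hn
      (fun j hj => hhn j (Finset.Icc_subset_Icc_right (Nat.sub_le n 1) hj))
      (fun j hj => hun j (Finset.Icc_subset_Icc_right (Nat.le_succ n) hj))
    have hjump : Differentiable ℝ fun p => interfaceHeight zb h n p • (u (n + 1) p - u n p) :=
      (differentiable_interfaceHeight hzb hhn).smul
        ((hun (n + 1) (by simp)).sub (hun n (by simpa using hn)))
    funext q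
    rw [hkrec n (Finset.mem_Icc.mpr ⟨hn, by omega⟩) q, ih (by omega), offsetFlux_succ hn,
      div2_add (hT q) (hjump q)]

end Layers

theorem stmt3_general
    (N : ℕ)
    (zb : ℝ × ℝ → ℝ) (hzbC1 : ContDiff ℝ 1 zb)
    (hlay : ℕ → ℝ × ℝ → ℝ)
    (hlayC1 : ∀ α ∈ Finset.Icc 1 N, ContDiff ℝ 1 (hlay α))
    (hlaypos : ∀ α ∈ Finset.Icc 1 N, ∀ q, 0 < hlay α q)
    (u : ℕ → ℝ × ℝ → ℝ × ℝ)
    (huC1 : ∀ α ∈ Finset.Icc 1 N, ContDiff ℝ 1 (u α))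
    (zh : ℕ → ℝ × ℝ → ℝ)
    (hzh : ∀ α q, zh α q = zb q + ∑ j ∈ Finset.Icc 1 α, hlay j q)
    (zm : ℕ → ℝ × ℝ → ℝ)
    (hzm : ∀ α q, zm α q = zh (α - 1) q + hlay α q / 2)
    (w : ℕ → ℝ → ℝ × ℝ → ℝ)
    (hw : ∀ α z q, w α z q =
      -div2 (fun p => (∑ j ∈ Finset.Icc 1 (α - 1), hlay j p • u j p)
        + (z - zh (α - 1) p) • u α p) q)
    (wavg : ℕ → ℝ × ℝ → ℝ)
    (hwavg : ∀ α q, wavg α q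
      = (1 / hlay α q) * ∫ z in (zh (α - 1) q)..(zh α q), w α z q)
    (k : ℕ → ℝ × ℝ → ℝ)
    (hk1 : ∀ q, k 1 q = div2 (fun p => zb p • u 1 p) q)
    (hkrec : ∀ α ∈ Finset.Icc 1 (N - 1), ∀ q,
      k (α + 1) q = k α q + div2 (fun p => zh α p • (u (α + 1) p - u α p)) q) :
    ∀ α ∈ Finset.Icc 1 N, ∀ q, wavg α q = k α q - zm α q * div2 (u α) q := by
  obtain rfl : zh = interfaceHeight zb hlay := funext fun α => funext (hzh α)
  have hzb := hzbC1.differentiable one_ne_zero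
  have hh : ∀ j ∈ Finset.Icc 1 N, Differentiable ℝ (hlay j) :=
    fun j hj => (hlayC1 j hj).differentiable one_ne_zero
  have hu : ∀ j ∈ Finset.Icc 1 N, Differentiable ℝ (u j) :=
    fun j hj => (huC1 j hj).differentiable one_ne_zero
  intro α hα q
  obtain ⟨hα1, hαN⟩ := Finset.mem_Icc.mp hα
  obtain ⟨m, rfl⟩ := Nat.exists_eq_add_of_le' hα1
  have hw_affine : ∀ z, w (m + 1) z q
      = div2 (offsetFlux zb hlay u (m + 1)) q - z * div2 (u (m + 1)) q := fun z => by
    rw [hw]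
    change -div2 (fluxBelow zb hlay u (m + 1) z) q = _
    rw [div2_fluxBelow hzb hα1
      (fun j hj => hh j (Finset.Icc_subset_Icc_right (by omega) hj))
      (fun j hj => hu j (Finset.Icc_subset_Icc_right hαN hj))]
    ring
  rw [hwavg, intervalIntegral.integral_congr fun z _ => hw_affine z, interfaceHeight_succ,
    add_tsub_cancel_right, one_div_mul_integral_const_sub_mul (hlaypos _ hα q).ne', hzm,
    eq_div2_offsetFlux hzb hh hu hk1 hkrec hα1 hαN, add_tsub_cancel_right]

/-- the layer-averaged vertical velocity of the layer-averaged
hydrostatic model is `w_α = k_α − z_α ∇_{x,y}·𝐮_α`. -/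
theorem stmt3
    (N : ℕ) (hN : 1 ≤ N)
    (zb : ℝ × ℝ → ℝ) (hzbC1 : ContDiff ℝ 1 zb)
    (hlay : ℕ → ℝ × ℝ → ℝ)
    (hlayC1 : ∀ α ∈ Finset.Icc 1 N, ContDiff ℝ 1 (hlay α))
    (hlaypos : ∀ α ∈ Finset.Icc 1 N, ∀ q, 0 < hlay α q)
    (u : ℕ → ℝ × ℝ → ℝ × ℝ)
    (huC1 : ∀ α ∈ Finset.Icc 1 N, ContDiff ℝ 1 (u α))
    (zh : ℕ → ℝ × ℝ → ℝ)
    (hzh : ∀ α q, zh α q = zb q + ∑ j ∈ Finset.Icc 1 α, hlay j q)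
    (zm : ℕ → ℝ × ℝ → ℝ)
    (hzm : ∀ α q, zm α q = zh (α - 1) q + hlay α q / 2)
    (w : ℕ → ℝ → ℝ × ℝ → ℝ)
    (hw : ∀ α z q, w α z q =
      -div2 (fun p => (∑ j ∈ Finset.Icc 1 (α - 1), hlay j p • u j p)
        + (z - zh (α - 1) p) • u α p) q)
    (wavg : ℕ → ℝ × ℝ → ℝ)
    (hwavg : ∀ α q, wavg α q
      = (1 / hlay α q) * ∫ z in (zh (α - 1) q)..(zh α q), w α z q)
    (k : ℕ → ℝ × ℝ → ℝ)
    (hk1 : ∀ q, k 1 q = div2 (fun p => zb p • u 1 p) q)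
    (hkrec : ∀ α ∈ Finset.Icc 1 (N - 1), ∀ q,
      k (α + 1) q = k α q + div2 (fun p => zh α p • (u (α + 1) p - u α p)) q) :
    ∀ α ∈ Finset.Icc 1 N, ∀ q, wavg α q = k α q - zm α q * div2 (u α) q :=
  stmt3_general N zb hzbC1 hlay hlayC1 hlaypos u huC1 zh hzh zm hzm w hw wavg hwavg k hk1 hkrec
end

section
/- Let g > 0, h ≥ 0 and u ∈ ℝ, and define the one-dimensional kinetic Maxwellian M(ξ) := (1/(gπ)) · √( max(0, 2gh − (ξ − u)²) ) for ξ ∈ ℝ. Then ∫_ℝ M(ξ) dξ = h, ∫_ℝ ξ M(ξ) dξ = h u, and ∫_ℝ ξ² M(ξ) dξ = h u² + g h²/2. -/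
/-!
After the translation `ξ = u + x` and the scaling `x = a y` with `a = √(2gh)`, the three moments
reduce to those of the semicircle `√(1 - y²)` on `[-1, 1]`: its area `π / 2`, its vanishing first
moment (odd integrand), and its second moment `π / 8`, computed by the substitution `y = sin θ`.
-/

open MeasureTheory Real Set Function

theorem sqrt_max_zero_left (t : ℝ) : √(max 0 t) = √t := by
  rcases le_total t 0 with ht | ht
  · rw [max_eq_left ht, sqrt_zero, sqrt_eq_zero'.mpr ht]
  · rw [max_eq_right ht]

theorem support_sqrt_sq_sub_sq_subset {a : ℝ} (ha : 0 ≤ a) :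
    support (fun x : ℝ => √(a ^ 2 - x ^ 2)) ⊆ Ioo (-a) a := by
  intro x hx
  rw [mem_support, ne_eq, sqrt_eq_zero', not_le, sub_pos] at hx
  exact abs_lt.mp (abs_lt_of_sq_lt_sq hx ha)

theorem integrable_mul_sqrt_sq_sub_sq {P : ℝ → ℝ} (hP : Continuous P) {a : ℝ} (ha : 0 ≤ a) :
    Integrable (fun x => P x * √(a ^ 2 - x ^ 2)) :=
  (by fun_prop : Continuous fun x => P x * √(a ^ 2 - x ^ 2)).integrable_of_hasCompactSupport
    (HasCompactSupport.of_support_subset_isCompact (isCompact_Icc (a := -a) (b := a))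
      ((support_mul_subset_right _ _).trans
        ((support_sqrt_sq_sub_sq_subset ha).trans Ioo_subset_Icc_self)))

theorem integral_mul_sqrt_sq_sub_sq_eq_intervalIntegral (P : ℝ → ℝ) {a : ℝ} (ha : 0 ≤ a) :
    ∫ x, P x * √(a ^ 2 - x ^ 2) = ∫ x in -a..a, P x * √(a ^ 2 - x ^ 2) :=
  (intervalIntegral.integral_eq_integral_of_support_subset ((support_mul_subset_right _ _).trans
    ((support_sqrt_sq_sub_sq_subset ha).trans Ioo_subset_Ioc_self))).symm

theorem integral_sq_mul_sqrt_one_sub_sq :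
    ∫ x in (-1 : ℝ)..1, x ^ 2 * √(1 - x ^ 2) = π / 8 :=
  calc
    _ = ∫ x in sin (-(π / 2))..sin (π / 2), x ^ 2 * √(1 - x ^ 2) := by
          rw [sin_neg, sin_pi_div_two]
    _ = ∫ x in (-(π / 2))..(π / 2), sin x ^ 2 * √(1 - sin x ^ 2) * cos x :=
          (intervalIntegral.integral_comp_mul_deriv (fun x _ => hasDerivAt_sin x)
            continuousOn_cos (by fun_prop)).symm
    _ = ∫ x in (-(π / 2))..(π / 2), sin x ^ 2 * cos x ^ 2 := by
          refine intervalIntegral.integral_congr fun x hx => ?_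
          rw [uIcc_of_le (neg_le_self (half_pos pi_pos).le)] at hx
          rw [← cos_eq_sqrt_one_sub_sin_sq hx.1 hx.2, mul_assoc, ← sq]
    _ = π / 8 := by
          rw [integral_sin_sq_mul_cos_sq, show 4 * (π / 2) = 2 * π by ring,
            show 4 * -(π / 2) = -(2 * π) by ring, sin_neg, sin_two_pi]
          ring

theorem integral_pow_mul_sqrt_sq_sub_sq (n : ℕ) {a : ℝ} (ha : 0 ≤ a) :
    ∫ x, x ^ n * √(a ^ 2 - x ^ 2) = a ^ (n + 2) * ∫ x, x ^ n * √(1 - x ^ 2) := by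
  rcases ha.eq_or_lt with rfl | ha
  · simp [sqrt_eq_zero'.mpr (neg_nonpos.mpr (sq_nonneg _))]
  have hscale : ∀ x, x ^ n * √(a ^ 2 - x ^ 2) =
      a ^ (n + 1) * ((a⁻¹ * x) ^ n * √(1 - (a⁻¹ * x) ^ 2)) := by
    intro x
    rw [show 1 - (a⁻¹ * x) ^ 2 = a⁻¹ ^ 2 * (a ^ 2 - x ^ 2) by field_simp,
      sqrt_mul (sq_nonneg _), sqrt_sq (inv_nonneg.mpr ha.le), mul_pow, inv_pow]
    field_simp
    ring
  simp_rw [hscale]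
  rw [integral_const_mul, Measure.integral_comp_inv_mul_left (fun y => y ^ n * √(1 - y ^ 2)),
    smul_eq_mul, abs_of_pos ha]
  ring

theorem integral_id_mul_sqrt_sq_sub_sq (a : ℝ) : ∫ x, x * √(a ^ 2 - x ^ 2) = 0 := by
  have h := integral_neg_eq_self (fun x : ℝ => x * √(a ^ 2 - x ^ 2)) volume
  simp only [neg_sq, neg_mul, integral_neg] at h
  linarith

theorem integral_sqrt_sq_sub_sq {a : ℝ} (ha : 0 ≤ a) : ∫ x, √(a ^ 2 - x ^ 2) = π * a ^ 2 / 2 := by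
  have hscale := integral_pow_mul_sqrt_sq_sub_sq 0 ha
  have hunit := integral_mul_sqrt_sq_sub_sq_eq_intervalIntegral 1 zero_le_one
  simp only [pow_zero, one_mul, one_pow, zero_add, Pi.one_apply] at hscale hunit
  rw [hscale, hunit, integral_sqrt_one_sub_sq]
  ring

theorem integral_sq_mul_sqrt_sq_sub_sq {a : ℝ} (ha : 0 ≤ a) :
    ∫ x, x ^ 2 * √(a ^ 2 - x ^ 2) = π * a ^ 4 / 8 := by
  have hunit := integral_mul_sqrt_sq_sub_sq_eq_intervalIntegral (· ^ 2) zero_le_one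
  rw [one_pow] at hunit
  rw [integral_pow_mul_sqrt_sq_sub_sq 2 ha, hunit, integral_sq_mul_sqrt_one_sub_sq]
  ring

theorem integral_mul_sqrt_sq_sub_sub_sq (P : ℝ → ℝ) (a u : ℝ) :
    ∫ ξ, P ξ * √(a ^ 2 - (ξ - u) ^ 2) = ∫ x, P (x + u) * √(a ^ 2 - x ^ 2) := by
  simpa using integral_sub_right_eq_self (fun x => P (x + u) * √(a ^ 2 - x ^ 2)) u

theorem integral_sqrt_sq_sub_sub_sq {a : ℝ} (ha : 0 ≤ a) (u : ℝ) :
    ∫ ξ, √(a ^ 2 - (ξ - u) ^ 2) = π * a ^ 2 / 2 :=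
  (integral_sub_right_eq_self (fun x => √(a ^ 2 - x ^ 2)) u).trans (integral_sqrt_sq_sub_sq ha)

theorem integral_id_mul_sqrt_sq_sub_sub_sq {a : ℝ} (ha : 0 ≤ a) (u : ℝ) :
    ∫ ξ, ξ * √(a ^ 2 - (ξ - u) ^ 2) = π * a ^ 2 / 2 * u := by
  have hI : ∀ n : ℕ, Integrable fun x : ℝ => x ^ n * √(a ^ 2 - x ^ 2) :=
    fun n => integrable_mul_sqrt_sq_sub_sq (continuous_pow n) ha
  rw [integral_mul_sqrt_sq_sub_sub_sq]
  calc ∫ x, (x + u) * √(a ^ 2 - x ^ 2)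
      = ∫ x, x ^ 1 * √(a ^ 2 - x ^ 2) + u * (x ^ 0 * √(a ^ 2 - x ^ 2)) := by
        congr 1; ext x; ring
    _ = π * a ^ 2 / 2 * u := by
        rw [integral_add (hI 1) ((hI 0).const_mul u), integral_const_mul]
        simp only [pow_one, pow_zero, one_mul, integral_id_mul_sqrt_sq_sub_sq,
          integral_sqrt_sq_sub_sq ha]
        ring

theorem integral_sq_mul_sqrt_sq_sub_sub_sq {a : ℝ} (ha : 0 ≤ a) (u : ℝ) :
    ∫ ξ, ξ ^ 2 * √(a ^ 2 - (ξ - u) ^ 2) = π * a ^ 2 / 2 * u ^ 2 + π * a ^ 4 / 8 := by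
  have hI : ∀ n : ℕ, Integrable fun x : ℝ => x ^ n * √(a ^ 2 - x ^ 2) :=
    fun n => integrable_mul_sqrt_sq_sub_sq (continuous_pow n) ha
  rw [integral_mul_sqrt_sq_sub_sub_sq]
  calc ∫ x, (x + u) ^ 2 * √(a ^ 2 - x ^ 2)
      = ∫ x, x ^ 2 * √(a ^ 2 - x ^ 2) + (2 * u) * (x ^ 1 * √(a ^ 2 - x ^ 2))
          + u ^ 2 * (x ^ 0 * √(a ^ 2 - x ^ 2)) := by
        congr 1; ext x; ring
    _ = π * a ^ 2 / 2 * u ^ 2 + π * a ^ 4 / 8 := by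
        have hI21 : Integrable fun x : ℝ =>
            x ^ 2 * √(a ^ 2 - x ^ 2) + (2 * u) * (x ^ 1 * √(a ^ 2 - x ^ 2)) :=
          (hI 2).add ((hI 1).const_mul _)
        rw [integral_add hI21 ((hI 0).const_mul _), integral_add (hI 2) ((hI 1).const_mul _),
          integral_const_mul, integral_const_mul]
        simp only [pow_one, pow_zero, one_mul, integral_id_mul_sqrt_sq_sub_sq,
          integral_sqrt_sq_sub_sq ha, integral_sq_mul_sqrt_sq_sub_sq ha]
        ring

/-- moments of the 1d kinetic Maxwellian
`M(ξ) = (1/(gπ)) √(max 0 (2gh − (ξ−u)²))`. -/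
theorem stmt4 (g h u : ℝ) (hg : 0 < g) (hh : 0 ≤ h)
    (M : ℝ → ℝ)
    (hM : ∀ ξ, M ξ = (1 / (g * Real.pi)) * Real.sqrt (max 0 (2 * g * h - (ξ - u) ^ 2))) :
    (∫ ξ : ℝ, M ξ) = h ∧
    (∫ ξ : ℝ, ξ * M ξ) = h * u ∧
    (∫ ξ : ℝ, ξ ^ 2 * M ξ) = h * u ^ 2 + g * h ^ 2 / 2 := by
  set a := √(2 * g * h)
  have ha : 0 ≤ a := sqrt_nonneg _
  have ha2 : a ^ 2 = 2 * g * h := sq_sqrt (by positivity)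
  have hM' : ∀ ξ, M ξ = (g * π)⁻¹ * √(a ^ 2 - (ξ - u) ^ 2) := fun ξ => by
    rw [hM, sqrt_max_zero_left, ha2, one_div]
  simp_rw [hM', mul_left_comm _ (g * π)⁻¹, integral_const_mul, integral_sqrt_sq_sub_sub_sq ha,
    integral_id_mul_sqrt_sq_sub_sub_sq ha, integral_sq_mul_sqrt_sq_sub_sub_sq ha,
    show a ^ 4 = (a ^ 2) ^ 2 by ring, ha2]
  refine ⟨?_, ?_, ?_⟩ <;> field_simp
  ring
end

section
/- Let g > 0, h ≥ 0, l_α ∈ (0,1], (u_α, v_α) ∈ ℝ², z_b ∈ ℝ, and set h_α = l_α h. Define the layer kinetic Maxwellian M_α(ξ,γ) := (l_α/(2gπ)) · 𝟙_{(ξ−u_α)² + (γ−v_α)² ≤ 2gh}, the kinetic entropy H(f, ξ, γ, z_b) := ((ξ² + γ²)/2 + g z_b) f, and the layer energy E_α := h_α (u_α² + v_α²)/2 + (g/2) h_α (h + 2 z_b). Then ∫_{ℝ²} H(M_α, ξ, γ, z_b) dξ dγ = E_α, ∫_{ℝ²} ξ H(M_α, ξ, γ, z_b) dξ dγ = u_α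 ( E_α + (g/2) h_α h ), and ∫_{ℝ²} γ H(M_α, ξ, γ, z_b) dξ dγ = v_α ( E_α + (g/2) h_α h ). -/
open MeasureTheory Real Set

lemma angular8 (A B C D E : ℝ) :
    (∫ θ in (-π)..π, (A + B * Real.cos θ + C * Real.sin θ + D * Real.cos θ ^ 2
      + E * (Real.sin θ * Real.cos θ))) = 2 * π * A + π * D := by
  have i1 : IntervalIntegrable (fun _ : ℝ => A) volume (-π) π := intervalIntegrable_const
  have i2 : IntervalIntegrable (fun θ : ℝ => B * Real.cos θ) volume (-π) π :=
    (continuous_const.mul Real.continuous_cos).intervalIntegrable _ _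
  have i3 : IntervalIntegrable (fun θ : ℝ => C * Real.sin θ) volume (-π) π :=
    (continuous_const.mul Real.continuous_sin).intervalIntegrable _ _
  have i4 : IntervalIntegrable (fun θ : ℝ => D * Real.cos θ ^ 2) volume (-π) π :=
    (continuous_const.mul (Real.continuous_cos.pow 2)).intervalIntegrable _ _
  have i5 : IntervalIntegrable (fun θ : ℝ => E * (Real.sin θ * Real.cos θ)) volume (-π) π :=
    (continuous_const.mul (Real.continuous_sin.mul Real.continuous_cos)).intervalIntegrable _ _
  rw [intervalIntegral.integral_add (((i1.add i2).add i3).add i4) i5,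
    intervalIntegral.integral_add ((i1.add i2).add i3) i4,
    intervalIntegral.integral_add (i1.add i2) i3,
    intervalIntegral.integral_add i1 i2,
    intervalIntegral.integral_const,
    intervalIntegral.integral_const_mul, intervalIntegral.integral_const_mul,
    intervalIntegral.integral_const_mul, intervalIntegral.integral_const_mul,
    integral_cos, integral_sin, integral_cos_sq, integral_sin_mul_cos₁]
  simp [Real.sin_pi, Real.cos_pi, Real.sin_neg, Real.cos_neg]
  ring

lemma master8 (r2 : ℝ) (h0 : 0 ≤ r2) (a1 a2 a3 a4 a5 a6 a7 a8 : ℝ) :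
    (∫ p : ℝ × ℝ, (if p.1 ^ 2 + p.2 ^ 2 ≤ r2 then
        a1 * (p.1 ^ 2 + p.2 ^ 2) + a2 * p.1 + a3 * p.2 + a4 + a5 * p.1 ^ 2
          + a6 * (p.1 * p.2) + a7 * (p.1 * (p.1 ^ 2 + p.2 ^ 2))
          + a8 * (p.2 * (p.1 ^ 2 + p.2 ^ 2)) else 0))
      = π * (a1 * r2 ^ 2 / 2 + a4 * r2 + a5 * r2 ^ 2 / 4) := by
  set r : ℝ := Real.sqrt r2 with hrdef
  have hr : 0 ≤ r := Real.sqrt_nonneg _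
  have hr2 : r ^ 2 = r2 := Real.sq_sqrt h0
  set Q : ℝ → ℝ → ℝ := fun x y =>
    a1 * (x ^ 2 + y ^ 2) + a2 * x + a3 * y + a4 + a5 * x ^ 2
      + a6 * (x * y) + a7 * (x * (x ^ 2 + y ^ 2)) + a8 * (y * (x ^ 2 + y ^ 2)) with hQ
  set G : ℝ → ℝ → ℝ := fun ρ θ =>
    if ρ ^ 2 ≤ r2 then ρ * Q (ρ * Real.cos θ) (ρ * Real.sin θ) else 0 with hG
  have hcs : ∀ ρ θ : ℝ, (ρ * Real.cos θ) ^ 2 + (ρ * Real.sin θ) ^ 2 = ρ ^ 2 := by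
    intro ρ θ
    have := Real.sin_sq_add_cos_sq θ
    nlinarith [this]
  have step1 : (∫ p : ℝ × ℝ, (if p.1 ^ 2 + p.2 ^ 2 ≤ r2 then Q p.1 p.2 else 0))
      = ∫ p in (Ioi (0:ℝ) ×ˢ Ioo (-π) π), G p.1 p.2 := by
    rw [← integral_comp_polarCoord_symm (fun p : ℝ × ℝ => if p.1 ^ 2 + p.2 ^ 2 ≤ r2 then Q p.1 p.2 else 0)]
    have htgt : polarCoord.target = Ioi (0:ℝ) ×ˢ Ioo (-π) π := rfl
    rw [htgt]
    apply setIntegral_congr_fun (by measurability)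
    intro p _
    simp only [polarCoord_symm_apply, smul_eq_mul, hG, hcs p.1 p.2]
    split_ifs with hcond
    · rfl
    · exact mul_zero _
  -- integrability of G on the product set
  set φ : ℝ × ℝ → ℝ := fun p => p.1 * Q (p.1 * Real.cos p.2) (p.1 * Real.sin p.2) with hφdef
  have hφc : Continuous φ := by fun_prop
  have hSm : MeasurableSet {p : ℝ × ℝ | p.1 ^ 2 ≤ r2} :=
    (isClosed_le (by fun_prop) continuous_const).measurableSet
  have hGind : (fun p : ℝ × ℝ => G p.1 p.2) = Set.indicator {p : ℝ × ℝ | p.1 ^ 2 ≤ r2} φ := by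
    funext p
    by_cases hp : p.1 ^ 2 ≤ r2
    · simp [hG, hp, Set.indicator_of_mem, hφdef]
    · simp [hG, hp, hφdef]
  have hint : IntegrableOn (fun p : ℝ × ℝ => G p.1 p.2) (Ioi (0:ℝ) ×ˢ Ioo (-π) π) := by
    rw [hGind]
    rw [IntegrableOn, integrable_indicator_iff hSm, IntegrableOn, Measure.restrict_restrict hSm]
    have hsub : {p : ℝ × ℝ | p.1 ^ 2 ≤ r2} ∩ (Ioi (0:ℝ) ×ˢ Ioo (-π) π)
        ⊆ Set.Icc ((-r, -π) : ℝ × ℝ) (r, π) := by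
      rintro ⟨x, y⟩ ⟨hx, hy⟩
      simp only [Set.mem_setOf_eq] at hx
      simp only [Set.mem_prod, Set.mem_Ioi, Set.mem_Ioo] at hy
      have : |x| ≤ r := Real.abs_le_sqrt hx
      rw [abs_le] at this
      constructor
      · exact ⟨this.1, hy.2.1.le⟩
      · exact ⟨this.2, hy.2.2.le⟩
    exact (hφc.continuousOn.integrableOn_compact isCompact_Icc).mono_set hsub
  have step2 : (∫ p in (Ioi (0:ℝ) ×ˢ Ioo (-π) π), G p.1 p.2)
      = ∫ ρ in Ioi (0:ℝ), ∫ θ in Ioo (-π) π, G ρ θ :=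
    setIntegral_prod _ hint
  have inner : ∀ ρ : ℝ, (∫ θ in Ioo (-π) π, G ρ θ)
      = (if ρ ^ 2 ≤ r2 then π * ((2 * a1 + a5) * ρ ^ 3 + 2 * a4 * ρ) else 0) := by
    intro ρ
    by_cases hρ : ρ ^ 2 ≤ r2
    · simp only [hG, if_pos hρ]
      rw [← integral_Ioc_eq_integral_Ioo,
        ← intervalIntegral.integral_of_le (by linarith [Real.pi_pos] : -π ≤ π)]
      have : (fun θ : ℝ => ρ * Q (ρ * Real.cos θ) (ρ * Real.sin θ))
          = fun θ : ℝ => (ρ * (a1 * ρ ^ 2 + a4))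
              + (a2 * ρ ^ 2 + a7 * ρ ^ 4) * Real.cos θ
              + (a3 * ρ ^ 2 + a8 * ρ ^ 4) * Real.sin θ
              + (a5 * ρ ^ 3) * Real.cos θ ^ 2
              + (a6 * ρ ^ 3) * (Real.sin θ * Real.cos θ) := by
        funext θ
        have hc := hcs ρ θ
        simp only [hQ]
        rw [hc]
        ring
      rw [this, angular8]
      ring
    · simp [hG, hρ]
  rw [step1, step2]
  rw [setIntegral_congr_fun measurableSet_Ioi (fun ρ hρ => inner ρ)]
  -- replace condition ρ^2 ≤ r2 by ρ ≤ r on Ioi 0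
  have hcond : ∀ ρ ∈ Ioi (0:ℝ),
      (if ρ ^ 2 ≤ r2 then π * ((2 * a1 + a5) * ρ ^ 3 + 2 * a4 * ρ) else 0)
      = Set.indicator (Iic r) (fun ρ => π * ((2 * a1 + a5) * ρ ^ 3 + 2 * a4 * ρ)) ρ := by
    intro ρ hρ
    have : ρ ^ 2 ≤ r2 ↔ ρ ∈ Iic r := by
      rw [Set.mem_Iic, hrdef]
      exact (Real.le_sqrt (le_of_lt hρ) h0).symm
    by_cases hρ2 : ρ ^ 2 ≤ r2
    · rw [if_pos hρ2, Set.indicator_of_mem (this.mp hρ2)]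
    · rw [if_neg hρ2, Set.indicator_of_notMem (fun hmem => hρ2 (this.mpr hmem))]
  rw [setIntegral_congr_fun measurableSet_Ioi hcond,
    setIntegral_indicator measurableSet_Iic,
    show Ioi (0:ℝ) ∩ Iic r = Ioc 0 r from Set.Ioi_inter_Iic,
    ← intervalIntegral.integral_of_le hr]
  have i1 : IntervalIntegrable (fun ρ : ℝ => (2 * a1 + a5) * ρ ^ 3) volume 0 r :=
    (continuous_const.mul (continuous_pow 3)).intervalIntegrable _ _
  have i2 : IntervalIntegrable (fun ρ : ℝ => 2 * a4 * ρ) volume 0 r :=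
    (continuous_const.mul continuous_id).intervalIntegrable _ _
  have : (fun ρ : ℝ => π * ((2 * a1 + a5) * ρ ^ 3 + 2 * a4 * ρ))
      = fun ρ : ℝ => π * ((2 * a1 + a5) * ρ ^ 3 + 2 * a4 * ρ) := rfl
  rw [intervalIntegral.integral_const_mul, intervalIntegral.integral_add i1 i2,
    intervalIntegral.integral_const_mul, intervalIntegral.integral_const_mul,
    integral_pow, integral_id]
  rw [← hr2]
  push_cast
  ring

/-- moments of the kinetic entropy of the layer kinetic Maxwellian. -/
theorem stmt8 (g h lα uα vα zb : ℝ) (hg : 0 < g) (hh : 0 ≤ h)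
    (hl0 : 0 < lα) (hl1 : lα ≤ 1) (hα : ℝ) (hhα : hα = lα * h)
    (M : ℝ × ℝ → ℝ)
    (hM : ∀ p : ℝ × ℝ, M p = (lα / (2 * g * Real.pi)) *
        (if (p.1 - uα) ^ 2 + (p.2 - vα) ^ 2 ≤ 2 * g * h then (1 : ℝ) else 0))
    (H : ℝ → ℝ → ℝ → ℝ → ℝ)
    (hH : ∀ f ξ γ z, H f ξ γ z = ((ξ ^ 2 + γ ^ 2) / 2 + g * z) * f)
    (E : ℝ)
    (hE : E = hα * (uα ^ 2 + vα ^ 2) / 2 + g / 2 * hα * (h + 2 * zb)) :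
    (∫ p : ℝ × ℝ, H (M p) p.1 p.2 zb) = E ∧
    (∫ p : ℝ × ℝ, p.1 * H (M p) p.1 p.2 zb) = uα * (E + g / 2 * hα * h) ∧
    (∫ p : ℝ × ℝ, p.2 * H (M p) p.1 p.2 zb) = vα * (E + g / 2 * hα * h) := by
  have h2gh : (0:ℝ) ≤ 2 * g * h := by positivity
  set c : ℝ := lα / (2 * g * π) with hc
  set K : ℝ := (uα ^ 2 + vα ^ 2) / 2 + g * zb with hK
  have hπ : (π : ℝ) ≠ 0 := Real.pi_ne_zero
  have hgne : g ≠ 0 := hg.ne'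
  -- part 1
  have key1 : (fun p : ℝ × ℝ => H (M (p + (uα, vα))) (p + (uα, vα)).1 (p + (uα, vα)).2 zb)
      = fun p : ℝ × ℝ => (if p.1 ^ 2 + p.2 ^ 2 ≤ 2 * g * h then
          (c / 2) * (p.1 ^ 2 + p.2 ^ 2) + (c * uα) * p.1 + (c * vα) * p.2 + (c * K)
            + 0 * p.1 ^ 2 + 0 * (p.1 * p.2) + 0 * (p.1 * (p.1 ^ 2 + p.2 ^ 2))
            + 0 * (p.2 * (p.1 ^ 2 + p.2 ^ 2)) else 0) := by
    funext p
    rw [hH, hM]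
    have h1 : (p + (uα, vα)).1 = p.1 + uα := rfl
    have h2 : (p + (uα, vα)).2 = p.2 + vα := rfl
    rw [h1, h2]
    have hcond : (p.1 + uα - uα) ^ 2 + (p.2 + vα - vα) ^ 2 = p.1 ^ 2 + p.2 ^ 2 := by ring
    rw [hcond]
    split_ifs with hcnd
    · rw [hc, hK]; ring
    · ring
  have I1 : (∫ p : ℝ × ℝ, H (M p) p.1 p.2 zb)
      = π * ((c / 2) * (2 * g * h) ^ 2 / 2 + (c * K) * (2 * g * h) + 0 * (2 * g * h) ^ 2 / 4) := by
    calc (∫ p : ℝ × ℝ, H (M p) p.1 p.2 zb)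
        = ∫ p : ℝ × ℝ, H (M (p + (uα, vα))) (p + (uα, vα)).1 (p + (uα, vα)).2 zb :=
          (integral_add_right_eq_self (fun p : ℝ × ℝ => H (M p) p.1 p.2 zb) (uα, vα)).symm
      _ = π * _ := by rw [key1]; exact master8 (2 * g * h) h2gh _ _ _ _ _ _ _ _
  -- part 2
  have key2 : (fun p : ℝ × ℝ => (p + (uα, vα)).1 * H (M (p + (uα, vα))) (p + (uα, vα)).1 (p + (uα, vα)).2 zb)
      = fun p : ℝ × ℝ => (if p.1 ^ 2 + p.2 ^ 2 ≤ 2 * g * h then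
          (c * uα / 2) * (p.1 ^ 2 + p.2 ^ 2) + (c * (K + uα ^ 2)) * p.1 + (c * uα * vα) * p.2
            + (c * uα * K) + (c * uα) * p.1 ^ 2 + (c * vα) * (p.1 * p.2)
            + (c / 2) * (p.1 * (p.1 ^ 2 + p.2 ^ 2)) + 0 * (p.2 * (p.1 ^ 2 + p.2 ^ 2)) else 0) := by
    funext p
    rw [hH, hM]
    have h1 : (p + (uα, vα)).1 = p.1 + uα := rfl
    have h2 : (p + (uα, vα)).2 = p.2 + vα := rfl
    rw [h1, h2]
    have hcond : (p.1 + uα - uα) ^ 2 + (p.2 + vα - vα) ^ 2 = p.1 ^ 2 + p.2 ^ 2 := by ring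
    rw [hcond]
    split_ifs with hcnd
    · rw [hc, hK]; ring
    · ring
  have I2 : (∫ p : ℝ × ℝ, p.1 * H (M p) p.1 p.2 zb)
      = π * ((c * uα / 2) * (2 * g * h) ^ 2 / 2 + (c * uα * K) * (2 * g * h)
          + (c * uα) * (2 * g * h) ^ 2 / 4) := by
    calc (∫ p : ℝ × ℝ, p.1 * H (M p) p.1 p.2 zb)
        = ∫ p : ℝ × ℝ, (p + (uα, vα)).1 * H (M (p + (uα, vα))) (p + (uα, vα)).1 (p + (uα, vα)).2 zb :=
          (integral_add_right_eq_self (fun p : ℝ × ℝ => p.1 * H (M p) p.1 p.2 zb) (uα, vα)).symm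
      _ = π * _ := by rw [key2]; exact master8 (2 * g * h) h2gh _ _ _ _ _ _ _ _
  -- part 3
  have key3 : (fun p : ℝ × ℝ => (p + (uα, vα)).2 * H (M (p + (uα, vα))) (p + (uα, vα)).1 (p + (uα, vα)).2 zb)
      = fun p : ℝ × ℝ => (if p.1 ^ 2 + p.2 ^ 2 ≤ 2 * g * h then
          (c * (3 * vα / 2)) * (p.1 ^ 2 + p.2 ^ 2) + (c * uα * vα) * p.1 + (c * (K + vα ^ 2)) * p.2
            + (c * vα * K) + (-(c * vα)) * p.1 ^ 2 + (c * uα) * (p.1 * p.2)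
            + 0 * (p.1 * (p.1 ^ 2 + p.2 ^ 2)) + (c / 2) * (p.2 * (p.1 ^ 2 + p.2 ^ 2)) else 0) := by
    funext p
    rw [hH, hM]
    have h1 : (p + (uα, vα)).1 = p.1 + uα := rfl
    have h2 : (p + (uα, vα)).2 = p.2 + vα := rfl
    rw [h1, h2]
    have hcond : (p.1 + uα - uα) ^ 2 + (p.2 + vα - vα) ^ 2 = p.1 ^ 2 + p.2 ^ 2 := by ring
    rw [hcond]
    split_ifs with hcnd
    · rw [hc, hK]; ring
    · ring
  have I3 : (∫ p : ℝ × ℝ, p.2 * H (M p) p.1 p.2 zb)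
      = π * ((c * (3 * vα / 2)) * (2 * g * h) ^ 2 / 2 + (c * vα * K) * (2 * g * h)
          + (-(c * vα)) * (2 * g * h) ^ 2 / 4) := by
    calc (∫ p : ℝ × ℝ, p.2 * H (M p) p.1 p.2 zb)
        = ∫ p : ℝ × ℝ, (p + (uα, vα)).2 * H (M (p + (uα, vα))) (p + (uα, vα)).1 (p + (uα, vα)).2 zb :=
          (integral_add_right_eq_self (fun p : ℝ × ℝ => p.2 * H (M p) p.1 p.2 zb) (uα, vα)).symm
      _ = π * _ := by rw [key3]; exact master8 (2 * g * h) h2gh _ _ _ _ _ _ _ _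
  refine ⟨?_, ?_, ?_⟩
  · rw [I1, hE, hhα, hc, hK]; field_simp; ring
  · rw [I2, hE, hhα, hc, hK]; field_simp; ring
  · rw [I3, hE, hhα, hc, hK]; field_simp; ring
end

section
/- Let N ≥ 1, Δt > 0, and let G be a real N × N matrix such that its diagonal entries are nonnegative, its off-diagonal entries are nonpositive, and each of its columns sums to zero (Σ_{α=1}^N G_{αβ} = 0 for every β). Set A := I_N + Δt G. Then A^T 𝟙 = 𝟙 (where 𝟙 is the vector of ones), and for every vector T ∈ ℝ^N with nonnegative entries one has ‖ (A^T)^{-1} T ‖_∞ ≤ ‖ T ‖_∞. -/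
/-- `Aᵀ 𝟙 = 𝟙` and the transposed inverse of `A = I + Δt G` is a
contraction in the sup norm on nonnegative vectors. -/
theorem stmt11 (N : ℕ) (hN : 1 ≤ N) (Δt : ℝ) (hΔt : 0 < Δt)
    (G : Matrix (Fin N) (Fin N) ℝ)
    (hdiag : ∀ i, 0 ≤ G i i)
    (hoff : ∀ i j, i ≠ j → G i j ≤ 0)
    (hcol : ∀ j, ∑ i, G i j = 0) :
    (1 + Δt • G).transpose.mulVec (fun _ => (1 : ℝ)) = (fun _ => (1 : ℝ)) ∧
    ∀ T : Fin N → ℝ, (∀ i, 0 ≤ T i) →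
      ‖((1 + Δt • G).transpose)⁻¹.mulVec T‖ ≤ ‖T‖ := by
  set A : Matrix (Fin N) (Fin N) ℝ := 1 + Δt • G with hA
  have hAsum : ∀ j, ∑ k, A k j = 1 := by
    intro j
    simp only [hA, Matrix.add_apply, Matrix.smul_apply, smul_eq_mul]
    rw [Finset.sum_add_distrib, ← Finset.mul_sum, hcol j, mul_zero, add_zero]
    simp [Matrix.one_apply, Finset.sum_ite_eq' (Finset.univ : Finset (Fin N)) j]
  have hAoff : ∀ k j, k ≠ j → A k j ≤ 0 := by
    intro k j hkj
    simp only [hA, Matrix.add_apply, Matrix.smul_apply, smul_eq_mul,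
      Matrix.one_apply_ne hkj, zero_add]
    exact mul_nonpos_of_nonneg_of_nonpos hΔt.le (hoff k j hkj)
  constructor
  · funext j
    simp only [Matrix.mulVec, Matrix.transpose_apply, dotProduct, mul_one]
    exact hAsum j
  · intro T hT
    by_cases hdet : IsUnit (A.transpose).det
    · set x : Fin N → ℝ := (A.transpose)⁻¹.mulVec T with hxdef
      have hx : A.transpose.mulVec x = T := by
        rw [hxdef, Matrix.mulVec_mulVec, Matrix.mul_nonsing_inv _ hdet, Matrix.one_mulVec]
      -- pick argmax index
      obtain ⟨i, -, hi⟩ := Finset.exists_max_image (Finset.univ : Finset (Fin N))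
        (fun k => |x k|) ⟨⟨0, hN⟩, Finset.mem_univ _⟩
      have hTi : T i = ∑ k, A k i * x k := by
        rw [← hx]; simp [Matrix.mulVec, Matrix.transpose_apply, dotProduct]
      have hxi : 0 ≤ x i := by
        by_contra hneg
        push_neg at hneg
        have hle : ∀ k, x i ≤ x k := by
          intro k
          have := hi k (Finset.mem_univ k)
          have h1 : x i = -|x i| := by rw [abs_of_neg hneg, neg_neg]
          calc x i = -|x i| := h1
            _ ≤ -|x k| := by linarith
            _ ≤ x k := neg_abs_le _
        have : T i ≤ x i := by
          rw [hTi]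
          calc ∑ k, A k i * x k ≤ ∑ k, A k i * x i := by
                apply Finset.sum_le_sum
                intro k _
                rcases eq_or_ne k i with rfl | hki
                · exact le_rfl
                · exact mul_le_mul_of_nonpos_left (hle k) (hAoff k i hki)
            _ = (∑ k, A k i) * x i := by rw [Finset.sum_mul]
            _ = x i := by rw [hAsum i, one_mul]
        linarith [hT i]
      have hkey : x i ≤ T i := by
        rw [hTi]
        calc x i = (∑ k, A k i) * x i := by rw [hAsum i, one_mul]
          _ = ∑ k, A k i * x i := by rw [Finset.sum_mul]
          _ ≤ ∑ k, A k i * x k := by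
              apply Finset.sum_le_sum
              intro k _
              rcases eq_or_ne k i with rfl | hki
              · exact le_rfl
              · have hxk : x k ≤ x i := by
                  have := hi k (Finset.mem_univ k)
                  calc x k ≤ |x k| := le_abs_self _
                    _ ≤ |x i| := this
                    _ = x i := abs_of_nonneg hxi
                exact mul_le_mul_of_nonpos_left hxk (hAoff k i hki)
      rw [pi_norm_le_iff_of_nonneg (norm_nonneg T)]
      intro j
      calc ‖x j‖ = |x j| := rfl
        _ ≤ |x i| := hi j (Finset.mem_univ j)
        _ = x i := abs_of_nonneg hxi
        _ ≤ T i := hkey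
        _ ≤ ‖T i‖ := le_abs_self _
        _ ≤ ‖T‖ := norm_le_pi_norm T i
    · rw [Matrix.nonsing_inv_apply_not_isUnit _ hdet, Matrix.zero_mulVec]
      simp
end

section
/- Let Δt₁ > 0 and Δt₂ > 0, and set Δt := 2 Δt₁ Δt₂ / (Δt₁ + Δt₂) and γ := Δt² / (2 Δt₁ Δt₂). Then: (a) 0 < γ ≤ 1; (b) γ (Δt₁ + Δt₂) = Δt and γ Δt₁ Δt₂ = Δt²/2; (c) consequently, in any real vector space, for all vectors y, F, D: (1 − γ) y + γ ( y + (Δt₁ + Δt₂) F + Δt₁ Δt₂ D ) = y + Δt F + (Δt²/2) D; and (d) the update y^{n+1} := (1 − γ) y^n + γ ỹ^{n+2} is a convex combination of y^n and ỹ^{n+2}, so that if all entries of y^n ∈ ℝ^d and ỹ^{n+2} ∈ ℝ^d are nonnegative then so are all entries of y^{n+1}. -/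
/-!
With `Δt` the harmonic mean of `Δt₁` and `Δt₂`, the weight simplifies to
`γ = 2 Δt₁ Δt₂ / (Δt₁ + Δt₂)²`, which lies in `(0, 1]` by AM–GM. The two-stage
Euler update contributes `(Δt₁ + Δt₂) F + Δt₁ Δt₂ D`, and scaling these coefficients by `γ`
gives exactly `Δt` and `Δt² / 2`, so the blended update reproduces the second-order Taylor
polynomial. Positivity is preserved because the blend is a convex combination.
-/

namespace ModifiedHeun

-- This and the identities below need no hypotheses, thanks to the junk value `x / 0 = 0`.
theorem sq_two_mul_mul_div_add_div (a b : ℝ) :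
    (2 * a * b / (a + b)) ^ 2 / (2 * a * b) = 2 * a * b / (a + b) ^ 2 := by
  rcases eq_or_ne (a * b) 0 with hab | hab
  · simp [mul_assoc, hab]
  · field_simp

theorem weight_pos {a b : ℝ} (ha : 0 < a) (hb : 0 < b) : 0 < 2 * a * b / (a + b) ^ 2 := by
  have : 0 < a + b := add_pos ha hb
  positivity

theorem weight_le_one (a b : ℝ) : 2 * a * b / (a + b) ^ 2 ≤ 1 := by
  refine div_le_one_of_le₀ ?_ (sq_nonneg _)
  nlinarith [sq_nonneg (a - b)]

theorem weight_mul_add (a b : ℝ) :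
    2 * a * b / (a + b) ^ 2 * (a + b) = 2 * a * b / (a + b) := by
  rcases eq_or_ne (a + b) 0 with h | h
  · simp [h]
  · field_simp

theorem weight_mul_mul (a b : ℝ) :
    2 * a * b / (a + b) ^ 2 * (a * b) = (2 * a * b / (a + b)) ^ 2 / 2 := by
  rw [div_pow]
  ring

theorem blend_two_stage_eq {R V : Type*} [Ring R] [AddCommGroup V] [Module R V]
    {γ s p c q : R} (hs : γ * s = c) (hp : γ * p = q) (y F D : V) :
    (1 - γ) • y + γ • (y + s • F + p • D) = y + c • F + q • D := by
  rw [smul_add, smul_add, smul_smul, smul_smul, hs, hp, sub_smul, one_smul]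
  abel

theorem blend_nonneg {ι : Type*} {γ : ℝ} (h0 : 0 ≤ γ) (h1 : γ ≤ 1) {x y : ι → ℝ}
    (hx : 0 ≤ x) (hy : 0 ≤ y) : 0 ≤ (1 - γ) • x + γ • y :=
  add_nonneg (smul_nonneg (sub_nonneg.2 h1) hx) (smul_nonneg h0 hy)

end ModifiedHeun

open ModifiedHeun in
/-- properties of the modified Heun scheme with variable time steps. -/
theorem stmt12 (Δt₁ Δt₂ : ℝ) (h1 : 0 < Δt₁) (h2 : 0 < Δt₂)
    (Δt γ : ℝ) (hΔt : Δt = 2 * Δt₁ * Δt₂ / (Δt₁ + Δt₂))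
    (hγ : γ = Δt ^ 2 / (2 * Δt₁ * Δt₂)) :
    (0 < γ ∧ γ ≤ 1) ∧
    (γ * (Δt₁ + Δt₂) = Δt ∧ γ * Δt₁ * Δt₂ = Δt ^ 2 / 2) ∧
    (∀ (V : Type*) [AddCommGroup V] [Module ℝ V] (y F D : V),
        (1 - γ) • y + γ • (y + (Δt₁ + Δt₂) • F + (Δt₁ * Δt₂) • D)
          = y + Δt • F + (Δt ^ 2 / 2) • D) ∧
    (∀ (d : ℕ) (yn yt : Fin d → ℝ), (∀ i, 0 ≤ yn i) → (∀ i, 0 ≤ yt i) →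
        ∀ i, 0 ≤ ((1 - γ) • yn + γ • yt) i) := by
  rw [hΔt, sq_two_mul_mul_div_add_div] at hγ
  subst hγ hΔt
  have hsum := weight_mul_add Δt₁ Δt₂
  have hprod := weight_mul_mul Δt₁ Δt₂
  have hpos := weight_pos h1 h2
  have hle := weight_le_one Δt₁ Δt₂
  exact ⟨⟨hpos, hle⟩, ⟨hsum, (mul_assoc _ _ _).trans hprod⟩,
    fun V _ _ => blend_two_stage_eq hsum hprod,
    fun _ _ _ => blend_nonneg hpos.le hle⟩
end

section
/- Let g > 0, α > 0, β > 0, 0 < γ < 1, and c < 0 with c ≤ 4g²/(γ − 1). Set ω := √(4αg), r² := x² + y², z_b(x,y) := α r²/2, f(ζ) := −4g/β² + (2/β²)√( 4g² + c ζ + β² α g (γ² − 1) ζ² ), h(t,x,y) := max{ 0, (1/r²) f( r²/(γ cos(ωt) − 1) ) }, u(t,x,y,z) := x ( β (z − z_b − h/2) + ω γ sin(ωt)/(2(1 − γ cos(ωt))) ), v(t,x,y,z) := y ( β (z − z_b − h/2) + ω γ sin(ωt)/(2(1 − γ cos(ωt))) ), and w(t,x,y,z) := − ∂_x ∫_{z_b}^z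 u dz' − ∂_y ∫_{z_b}^z v dz'. Then at every (t,x,y) with r > 0, f( r²/(γ cos(ωt) − 1) ) > 0 and 4g² + c ζ + β² α g (γ² − 1) ζ² > 0 for ζ = r²/(γ cos(ωt) − 1), the following hold for z_b(x,y) ≤ z ≤ z_b(x,y) + h(t,x,y): (i) ∂_x u + ∂_y v + ∂_z w = 0; (ii) ∂_t u + u ∂_x u + v ∂_y u + w ∂_z u + g ∂_x (h + z_b) = 0 and ∂_t v + u ∂_x v + v ∂_y v + w ∂_z v + g ∂_y (h + z_b) = 0; (iii) the kinematic free-surface condition ∂_t(h + z_b) + u ∂_x (h + z_b) + v ∂_y (h + z_b) − w = 0 holds at z = z_b + h, and the bottom impermeability condition w = u ∂_x z_b + v ∂_y z_b holds at z = z_b. -/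
open MeasureTheory Real

/-!
Write `u = x U`, `v = y U` with `U = β (z - z_b - h/2) + K(t)`. As `U` is affine in `z`, the
column integrals defining `w` are explicit. For any `h`, `z_b`, `K` this gives incompressibility
and bottom impermeability, turns each momentum equation into a `z`-independent scalar identity,
and turns the kinematic condition into `h_t + K (x h_x + y h_y + 2 h) = 0`.

For the bowl, `D(t) = γ cos(ωt) - 1`, `K = D' / (2D)` and `h = f(ζ) / r²` with `ζ = r² / D`, so the
kinematic identity holds whatever `f` is. In the momentum identity the terms in `K f'(ζ)` cancel,
leaving `(K' + K² + αg) + (ζ f' (β²f/2 + 2g) - (β²f²/4 + 2gf)) / r²`. The first bracket is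
`αg (1 - γ²) / D²` by the Riccati equation for `K`, and differentiating the quadratic relation
`β²f²/4 + 2gf = (cζ + β²αg(γ² - 1)ζ²) / β²` of the square-root profile shows that the second is
its negative.
-/

theorem hasDerivAt_max_zero_of_pos {φ : ℝ → ℝ} {φ' p : ℝ} (hφ : HasDerivAt φ φ' p)
    (hp : 0 < φ p) : HasDerivAt (fun s => max 0 (φ s)) φ' p :=
  hφ.congr_of_eventuallyEq <|
    (hφ.continuousAt.eventually (lt_mem_nhds hp)).mono fun _ hs => max_eq_right hs.le

theorem HasDerivAt.comp_sq_add_sq_left {Ψ : ℝ → ℝ} {Ψ' x y : ℝ}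
    (hΨ : HasDerivAt Ψ Ψ' (x ^ 2 + y ^ 2)) :
    HasDerivAt (fun s => Ψ (s ^ 2 + y ^ 2)) (2 * x * Ψ') x :=
  (hΨ.comp x ((hasDerivAt_pow 2 x).add_const (y ^ 2))).congr_deriv (by ring)

theorem HasDerivAt.comp_sq_add_sq_right {Ψ : ℝ → ℝ} {Ψ' x y : ℝ}
    (hΨ : HasDerivAt Ψ Ψ' (x ^ 2 + y ^ 2)) :
    HasDerivAt (fun s => Ψ (x ^ 2 + s ^ 2)) (2 * y * Ψ') y :=
  (hΨ.comp y ((hasDerivAt_pow 2 y).const_add (x ^ 2))).congr_deriv (by ring)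

theorem integral_velocityFactor (β k a b z : ℝ) :
    ∫ ζ in a..z, (β * (ζ - a - b / 2) + k)
      = β * (z - a) ^ 2 / 2 + (k - β * b / 2) * (z - a) := by
  have hF (ζ : ℝ) (_ : ζ ∈ Set.uIcc a z) : HasDerivAt
      (fun ζ => β * (ζ - a) ^ 2 / 2 + (k - β * b / 2) * (ζ - a)) (β * (ζ - a - b / 2) + k) ζ :=
    (((((hasDerivAt_id' ζ).sub_const a).fun_pow 2).const_mul β).div_const 2 |>.fun_add
      (((hasDerivAt_id' ζ).sub_const a).const_mul (k - β * b / 2))).congr_deriv (by ring)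
  rw [intervalIntegral.integral_eq_sub_of_hasDerivAt hF
    ((by fun_prop : Continuous fun ζ => β * (ζ - a - b / 2) + k).intervalIntegrable a z)]
  ring

section ColumnSlice

variable {a b : ℝ → ℝ} {a' b' p : ℝ} (β k z : ℝ)

theorem hasDerivAt_velocityFactor (ha : HasDerivAt a a' p) (hb : HasDerivAt b b' p) :
    HasDerivAt (fun s => β * (z - a s - b s / 2) + k) (-(β * (a' + b' / 2))) p :=
  ((((ha.const_sub z).fun_sub (hb.div_const 2)).const_mul β).add_const k).congr_deriv (by ring)

theorem hasDerivAt_columnIntegral (ha : HasDerivAt a a' p) (hb : HasDerivAt b b' p) :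
    HasDerivAt (fun s => ∫ ζ in a s..z, s * (β * (ζ - a s - b s / 2) + k))
      (β * (z - a p) ^ 2 / 2 + (k - β * b p / 2) * (z - a p)
        - p * (a' * (β * (z - a p) + k - β * b p / 2) + β * b' / 2 * (z - a p))) p := by
  simp only [intervalIntegral.integral_const_mul, integral_velocityFactor]
  exact ((hasDerivAt_id' p).fun_mul
    (((((ha.const_sub z).fun_pow 2).const_mul β).div_const 2).fun_add
      ((((hb.const_mul β).div_const 2).const_sub k).fun_mul (ha.const_sub z)))).congr_deriv
    (by ring)

end ColumnSlice

section ColumnAnsatz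

variable {β : ℝ} {zb : ℝ → ℝ → ℝ} {h : ℝ → ℝ → ℝ → ℝ} {K : ℝ → ℝ}
  {u v w : ℝ → ℝ → ℝ → ℝ → ℝ} {t x y hx hy zx zy : ℝ}

theorem column_w_eq
    (hu : ∀ t x y z, u t x y z = x * (β * (z - zb x y - h t x y / 2) + K t))
    (hv : ∀ t x y z, v t x y z = y * (β * (z - zb x y - h t x y / 2) + K t))
    (hw : ∀ t x y z, w t x y z
      = -deriv (fun s => ∫ ζ in (zb s y)..z, u t s y ζ) x
        - deriv (fun s => ∫ ζ in (zb x s)..z, v t x s ζ) y)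
    (hhx : HasDerivAt (fun s => h t s y) hx x) (hhy : HasDerivAt (fun s => h t x s) hy y)
    (hzx : HasDerivAt (fun s => zb s y) zx x) (hzy : HasDerivAt (fun s => zb x s) zy y) (z : ℝ) :
    w t x y z = -β * (z - zb x y) ^ 2 - 2 * (K t - β * h t x y / 2) * (z - zb x y)
      + (x * zx + y * zy) * (β * (z - zb x y) + (K t - β * h t x y / 2))
      + β * (x * hx + y * hy) / 2 * (z - zb x y) := by
  simp only [hw, hu, hv]
  rw [(hasDerivAt_columnIntegral β (K t) z hzx hhx).deriv,
    (hasDerivAt_columnIntegral β (K t) z hzy hhy).deriv]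
  ring

theorem column_residuals {g K' ht : ℝ}
    (hu : ∀ t x y z, u t x y z = x * (β * (z - zb x y - h t x y / 2) + K t))
    (hv : ∀ t x y z, v t x y z = y * (β * (z - zb x y - h t x y / 2) + K t))
    (hw : ∀ t x y z, w t x y z
      = -deriv (fun s => ∫ ζ in (zb s y)..z, u t s y ζ) x
        - deriv (fun s => ∫ ζ in (zb x s)..z, v t x s ζ) y)
    (hK : HasDerivAt K K' t) (hht : HasDerivAt (fun s => h s x y) ht t)
    (hhx : HasDerivAt (fun s => h t s y) hx x) (hhy : HasDerivAt (fun s => h t x s) hy y)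
    (hzx : HasDerivAt (fun s => zb s y) zx x) (hzy : HasDerivAt (fun s => zb x s) zy y) :
    let A := K t - β * h t x y / 2
    let M := K' - β * ht / 2 + A ^ 2 - β * A * (x * hx + y * hy) / 2
    (∀ z, (deriv (fun s => u t s y z) x + deriv (fun s => v t x s z) y
        + deriv (fun s => w t x y s) z = 0) ∧
      (deriv (fun s => u s x y z) t + u t x y z * deriv (fun s => u t s y z) x
        + v t x y z * deriv (fun s => u t x s z) y + w t x y z * deriv (fun s => u t x y s) z
        + g * deriv (fun s => h t s y + zb s y) x = x * M + g * (hx + zx)) ∧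
      (deriv (fun s => v s x y z) t + u t x y z * deriv (fun s => v t s y z) x
        + v t x y z * deriv (fun s => v t x s z) y + w t x y z * deriv (fun s => v t x y s) z
        + g * deriv (fun s => h t x s + zb x s) y = y * M + g * (hy + zy))) ∧
    (deriv (fun s => h s x y + zb x y) t
      + u t x y (zb x y + h t x y) * deriv (fun s => h t s y + zb s y) x
      + v t x y (zb x y + h t x y) * deriv (fun s => h t x s + zb x s) y
      - w t x y (zb x y + h t x y) = ht + K t * (x * hx + y * hy + 2 * h t x y)) ∧
    (w t x y (zb x y)
      = u t x y (zb x y) * deriv (fun s => zb s y) x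
        + v t x y (zb x y) * deriv (fun s => zb x s) y) := by
  intro A M
  have hW := column_w_eq hu hv hw hhx hhy hzx hzy
  have hWz (z : ℝ) : HasDerivAt (fun s => w t x y s)
      (-2 * β * (z - zb x y) - 2 * A + (x * zx + y * zy) * β + β * (x * hx + y * hy) / 2) z := by
    simp only [hW]
    have hη := (hasDerivAt_id' z).sub_const (zb x y)
    refine ((((hη.fun_pow 2).const_mul (-β)).fun_sub (hη.const_mul (2 * A))).fun_add
      (((hη.const_mul β).add_const A).const_mul (x * zx + y * zy))).fun_add
      (hη.const_mul (β * (x * hx + y * hy) / 2)) |>.congr_deriv ?_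
    ring
  have hFx (z : ℝ) := hasDerivAt_velocityFactor β (K t) z hzx hhx
  have hFy (z : ℝ) := hasDerivAt_velocityFactor β (K t) z hzy hhy
  have hFt (z : ℝ) : HasDerivAt (fun s => β * (z - zb x y - h s x y / 2) + K s)
      (-(β * ht / 2) + K') t :=
    (((hht.div_const 2).const_sub (z - zb x y)).const_mul β).fun_add hK |>.congr_deriv (by ring)
  have hFz (z : ℝ) : HasDerivAt (fun s => β * (s - zb x y - h t x y / 2) + K t) β z :=
    ((((hasDerivAt_id' z).sub_const (zb x y)).sub_const (h t x y / 2)).const_mul β).add_const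
      (K t) |>.congr_deriv (by ring)
  refine ⟨fun z => ⟨?_, ?_, ?_⟩, ?_, ?_⟩
  · simp only [hu, hv]
    rw [((hasDerivAt_id' x).fun_mul (hFx z)).deriv, ((hasDerivAt_id' y).fun_mul (hFy z)).deriv,
      (hWz z).deriv]
    ring
  · simp only [hu, hv]
    rw [((hFt z).const_mul x).deriv, ((hasDerivAt_id' x).fun_mul (hFx z)).deriv,
      ((hFy z).const_mul x).deriv, ((hFz z).const_mul x).deriv, (hhx.fun_add hzx).deriv, hW]
    ring
  · simp only [hu, hv]
    rw [((hFt z).const_mul y).deriv, ((hasDerivAt_id' y).fun_mul (hFy z)).deriv,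
      ((hFx z).const_mul y).deriv, ((hFz z).const_mul y).deriv, (hhy.fun_add hzy).deriv, hW]
    ring
  · rw [(hht.add_const (zb x y)).deriv, (hhx.fun_add hzx).deriv, (hhy.fun_add hzy).deriv,
      hu, hv, hW]
    ring
  · rw [hzx.deriv, hzy.deriv, hu, hv, hW]
    ring

end ColumnAnsatz

noncomputable def bowlScale (γ ω t : ℝ) : ℝ := γ * cos (ω * t) - 1

noncomputable def bowlRate (γ ω t : ℝ) : ℝ :=
  ω * γ * sin (ω * t) / (2 * (1 - γ * cos (ω * t)))

section Bowl

variable {γ ω t : ℝ}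

theorem bowlScale_neg (hγ0 : 0 < γ) (hγ1 : γ < 1) (ω t : ℝ) : bowlScale γ ω t < 0 := by
  unfold bowlScale
  nlinarith [cos_le_one (ω * t)]

theorem hasDerivAt_bowlScale (hD : bowlScale γ ω t ≠ 0) :
    HasDerivAt (bowlScale γ ω) (2 * bowlRate γ ω t * bowlScale γ ω t) t := by
  unfold bowlScale bowlRate at *
  have h1 : 1 - γ * cos (ω * t) ≠ 0 := fun h => hD (by linarith)
  refine ((((hasDerivAt_id' t).const_mul ω).cos.const_mul γ).sub_const 1).congr_deriv ?_
  field_simp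
  ring

theorem hasDerivAt_bowlRate {α g : ℝ} (hω : ω ^ 2 = 4 * α * g) (hD : bowlScale γ ω t ≠ 0) :
    HasDerivAt (bowlRate γ ω)
      (α * g * (1 - γ ^ 2) / bowlScale γ ω t ^ 2 - α * g - bowlRate γ ω t ^ 2) t := by
  unfold bowlScale bowlRate at *
  have h1 : 1 - γ * cos (ω * t) ≠ 0 := fun h => hD (by linarith)
  have hωt := (hasDerivAt_id' t).const_mul ω
  refine ((hωt.sin.const_mul (ω * γ)).fun_div
    ((hωt.cos.const_mul γ).const_sub 1 |>.const_mul 2) (mul_ne_zero two_ne_zero h1)).congr_deriv ?_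
  have hαg : α * g = ω ^ 2 / 4 := by linarith
  rw [hαg]
  have hsc := sin_sq_add_cos_sq (ω * t)
  set C := cos (ω * t)
  field_simp
  linear_combination -4 * ω ^ 2 * γ ^ 2 * (1 - γ * C) ^ 2 * hsc

end Bowl

theorem exists_hasDerivAt_sqrtProfile {g β c e ζ : ℝ} {f : ℝ → ℝ} (hβ : β ≠ 0)
    (hf : ∀ ζ, f ζ = -(4 * g) / β ^ 2 + (2 / β ^ 2) * √(4 * g ^ 2 + c * ζ + e * ζ ^ 2))
    (hP : 0 < 4 * g ^ 2 + c * ζ + e * ζ ^ 2) :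
    ∃ f', HasDerivAt f f' ζ ∧
      ζ * f' * (β ^ 2 * f ζ / 2 + 2 * g) - (β ^ 2 * f ζ ^ 2 / 4 + 2 * g * f ζ)
        = e * ζ ^ 2 / β ^ 2 := by
  have hP' : HasDerivAt (fun ζ => 4 * g ^ 2 + c * ζ + e * ζ ^ 2) (c + e * (2 * ζ)) ζ :=
    (((hasDerivAt_id' ζ).const_mul c).const_add _).fun_add ((hasDerivAt_pow 2 ζ).const_mul e)
      |>.congr_deriv (by ring)
  rw [show f = _ from funext hf]
  refine ⟨_, ((hP'.sqrt hP.ne').const_mul (2 / β ^ 2)).const_add (-(4 * g) / β ^ 2), ?_⟩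
  have hq := sq_sqrt hP.le
  have hq0 := (sqrt_pos.2 hP).ne'
  beta_reduce
  set q := √(4 * g ^ 2 + c * ζ + e * ζ ^ 2)
  field_simp
  linear_combination (-8 * q) * hq

theorem hasDerivAt_depth_radius {f : ℝ → ℝ} {F' R D : ℝ} (hR : R ≠ 0) (hD : D ≠ 0)
    (hf : HasDerivAt f F' (R / D)) :
    HasDerivAt (fun r => 1 / r * f (r / D)) ((F' / D - 1 / R * f (R / D)) / R) R := by
  refine (((hasDerivAt_const R 1).fun_div (hasDerivAt_id' R) hR).fun_mul
    (hf.comp R ((hasDerivAt_id' R).div_const D))).congr_deriv ?_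
  simp only [Function.comp_apply]
  field_simp
  ring

theorem hasDerivAt_depth_time {f D : ℝ → ℝ} {F' D' R t : ℝ} (hR : R ≠ 0) (hD : D t ≠ 0)
    (hDd : HasDerivAt D D' t) (hf : HasDerivAt f F' (R / D t)) :
    HasDerivAt (fun s => 1 / R * f (R / D s)) (-(F' * D' / D t ^ 2)) t := by
  refine ((hf.comp t ((hasDerivAt_const t R).fun_div hDd hD)).const_mul (1 / R)).congr_deriv ?_
  field_simp
  ring

theorem hasDerivAt_truncatedDepth {f D : ℝ → ℝ} {h : ℝ → ℝ → ℝ → ℝ} {F' D' t x y : ℝ}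
    (hh : ∀ t x y, h t x y = max 0 (1 / (x ^ 2 + y ^ 2) * f ((x ^ 2 + y ^ 2) / D t)))
    (hR : 0 < x ^ 2 + y ^ 2) (hD : D t ≠ 0) (hpos : 0 < f ((x ^ 2 + y ^ 2) / D t))
    (hDd : HasDerivAt D D' t) (hf : HasDerivAt f F' ((x ^ 2 + y ^ 2) / D t)) :
    let H := 1 / (x ^ 2 + y ^ 2) * f ((x ^ 2 + y ^ 2) / D t)
    let HR := (F' / D t - H) / (x ^ 2 + y ^ 2)
    h t x y = H ∧ HasDerivAt (fun s => h t s y) (2 * x * HR) x ∧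
      HasDerivAt (fun s => h t x s) (2 * y * HR) y ∧
      HasDerivAt (fun s => h s x y) (-(F' * D' / D t ^ 2)) t := by
  intro H HR
  have hHpos : 0 < H := mul_pos (one_div_pos.2 hR) hpos
  have hHR := hasDerivAt_max_zero_of_pos (hasDerivAt_depth_radius hR.ne' hD hf) hHpos
  simp only [hh]
  exact ⟨max_eq_right hHpos.le, hHR.comp_sq_add_sq_left, hHR.comp_sq_add_sq_right,
    hasDerivAt_max_zero_of_pos (hasDerivAt_depth_time hR.ne' hD hDd hf) hHpos⟩

theorem bowl_momentum_balance {g α β γ R D F F' K K' ht : ℝ} (hR : R ≠ 0) (hD : D ≠ 0)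
    (hβ : β ≠ 0) (hK' : K' = α * g * (1 - γ ^ 2) / D ^ 2 - α * g - K ^ 2)
    (hht : ht = -(F' * (2 * K * D) / D ^ 2))
    (hF : R / D * F' * (β ^ 2 * F / 2 + 2 * g) - (β ^ 2 * F ^ 2 / 4 + 2 * g * F)
      = β ^ 2 * α * g * (γ ^ 2 - 1) * (R / D) ^ 2 / β ^ 2) :
    let H := 1 / R * F
    let HR := (F' / D - H) / R
    let A := K - β * H / 2
    K' - β * ht / 2 + A ^ 2 - β * A * R * HR + g * (2 * HR + α) = 0 := by
  intro H HR A
  simp only [H, HR, A, hK', hht]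
  linear_combination (norm := skip) (1 / R ^ 2) * hF
  field_simp
  ring

theorem stmt13_general (g α β γ c : ℝ) (hg : 0 < g) (hα : 0 < α) (hβ : 0 < β)
    (hγ0 : 0 < γ) (hγ1 : γ < 1)
    (ω : ℝ) (hω : ω = Real.sqrt (4 * α * g))
    (zb : ℝ → ℝ → ℝ) (hzb : ∀ x y, zb x y = α * (x ^ 2 + y ^ 2) / 2)
    (f : ℝ → ℝ)
    (hf : ∀ ζ, f ζ = -(4 * g) / β ^ 2
      + (2 / β ^ 2) * Real.sqrt (4 * g ^ 2 + c * ζ + β ^ 2 * α * g * (γ ^ 2 - 1) * ζ ^ 2))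
    (h : ℝ → ℝ → ℝ → ℝ)
    (hh : ∀ t x y, h t x y
      = max 0 ((1 / (x ^ 2 + y ^ 2)) * f ((x ^ 2 + y ^ 2) / (γ * Real.cos (ω * t) - 1))))
    (u v : ℝ → ℝ → ℝ → ℝ → ℝ)
    (hu : ∀ t x y z, u t x y z
      = x * (β * (z - zb x y - h t x y / 2)
        + ω * γ * Real.sin (ω * t) / (2 * (1 - γ * Real.cos (ω * t)))))
    (hv : ∀ t x y z, v t x y z
      = y * (β * (z - zb x y - h t x y / 2)
        + ω * γ * Real.sin (ω * t) / (2 * (1 - γ * Real.cos (ω * t)))))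
    (w : ℝ → ℝ → ℝ → ℝ → ℝ)
    (hw : ∀ t x y z, w t x y z
      = -deriv (fun s => ∫ ζ in (zb s y)..z, u t s y ζ) x
        - deriv (fun s => ∫ ζ in (zb x s)..z, v t x s ζ) y)
    (t x y : ℝ) (hr : 0 < x ^ 2 + y ^ 2)
    (hfpos : 0 < f ((x ^ 2 + y ^ 2) / (γ * Real.cos (ω * t) - 1)))
    (hdisc : 0 < 4 * g ^ 2 + c * ((x ^ 2 + y ^ 2) / (γ * Real.cos (ω * t) - 1))
      + β ^ 2 * α * g * (γ ^ 2 - 1) * ((x ^ 2 + y ^ 2) / (γ * Real.cos (ω * t) - 1)) ^ 2) :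
    (∀ z, zb x y ≤ z → z ≤ zb x y + h t x y →
      -- (i) incompressibility
      (deriv (fun s => u t s y z) x + deriv (fun s => v t x s z) y
        + deriv (fun s => w t x y s) z = 0) ∧
      -- (ii) horizontal momentum equations
      (deriv (fun s => u s x y z) t + u t x y z * deriv (fun s => u t s y z) x
        + v t x y z * deriv (fun s => u t x s z) y + w t x y z * deriv (fun s => u t x y s) z
        + g * deriv (fun s => h t s y + zb s y) x = 0) ∧
      (deriv (fun s => v s x y z) t + u t x y z * deriv (fun s => v t s y z) x
        + v t x y z * deriv (fun s => v t x s z) y + w t x y z * deriv (fun s => v t x y s) z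
        + g * deriv (fun s => h t x s + zb x s) y = 0)) ∧
    -- (iii) kinematic free-surface condition
    (deriv (fun s => h s x y + zb x y) t
      + u t x y (zb x y + h t x y) * deriv (fun s => h t s y + zb s y) x
      + v t x y (zb x y + h t x y) * deriv (fun s => h t x s + zb x s) y
      - w t x y (zb x y + h t x y) = 0) ∧
    -- (iii) bottom impermeability condition
    (w t x y (zb x y)
      = u t x y (zb x y) * deriv (fun s => zb s y) x
        + v t x y (zb x y) * deriv (fun s => zb x s) y) := by
  have hω2 : ω ^ 2 = 4 * α * g := by rw [hω, sq_sqrt (by positivity)]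
  have hD : bowlScale γ ω t ≠ 0 := (bowlScale_neg hγ0 hγ1 ω t).ne
  obtain ⟨F', hF', hrel⟩ :=
    exists_hasDerivAt_sqrtProfile (ζ := (x ^ 2 + y ^ 2) / bowlScale γ ω t) hβ.ne' hf hdisc
  obtain ⟨hh0, hhx, hhy, hht⟩ := hasDerivAt_truncatedDepth (D := bowlScale γ ω) hh hr hD hfpos
    (hasDerivAt_bowlScale hD) hF'
  have hzb' : HasDerivAt (fun R => α * R / 2) (α / 2) (x ^ 2 + y ^ 2) :=
    ((hasDerivAt_id' _).const_mul α).div_const 2 |>.congr_deriv (by ring)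
  have hzx : HasDerivAt (fun s => zb s y) (2 * x * (α / 2)) x := by
    simpa only [hzb] using hzb'.comp_sq_add_sq_left
  have hzy : HasDerivAt (fun s => zb x s) (2 * y * (α / 2)) y := by
    simpa only [hzb] using hzb'.comp_sq_add_sq_right
  obtain ⟨hcol, hkin, hbot⟩ := column_residuals (K := bowlRate γ ω) (g := g) hu hv hw
    (hasDerivAt_bowlRate hω2 hD) hht hhx hhy hzx hzy
  have hbal := bowl_momentum_balance (K := bowlRate γ ω t) hr.ne' hD hβ.ne' rfl rfl hrel
  refine ⟨fun z _ _ => ?_, ?_, hbot⟩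
  · obtain ⟨hdiv, hmx, hmy⟩ := hcol z
    exact ⟨hdiv, by rw [hmx, hh0]; linear_combination x * hbal,
      by rw [hmy, hh0]; linear_combination y * hbal⟩
  · rw [hkin, hh0]
    field_simp
    ring

/-- the radially-symmetrical parabolic-bowl solution is an
analytical solution of the 3d incompressible hydrostatic Euler system. -/
theorem stmt13 (g α β γ c : ℝ) (hg : 0 < g) (hα : 0 < α) (hβ : 0 < β)
    (hγ0 : 0 < γ) (hγ1 : γ < 1) (hc : c < 0) (hc' : c ≤ 4 * g ^ 2 / (γ - 1))
    (ω : ℝ) (hω : ω = Real.sqrt (4 * α * g))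
    (zb : ℝ → ℝ → ℝ) (hzb : ∀ x y, zb x y = α * (x ^ 2 + y ^ 2) / 2)
    (f : ℝ → ℝ)
    (hf : ∀ ζ, f ζ = -(4 * g) / β ^ 2
      + (2 / β ^ 2) * Real.sqrt (4 * g ^ 2 + c * ζ + β ^ 2 * α * g * (γ ^ 2 - 1) * ζ ^ 2))
    (h : ℝ → ℝ → ℝ → ℝ)
    (hh : ∀ t x y, h t x y
      = max 0 ((1 / (x ^ 2 + y ^ 2)) * f ((x ^ 2 + y ^ 2) / (γ * Real.cos (ω * t) - 1))))
    (u v : ℝ → ℝ → ℝ → ℝ → ℝ)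
    (hu : ∀ t x y z, u t x y z
      = x * (β * (z - zb x y - h t x y / 2)
        + ω * γ * Real.sin (ω * t) / (2 * (1 - γ * Real.cos (ω * t)))))
    (hv : ∀ t x y z, v t x y z
      = y * (β * (z - zb x y - h t x y / 2)
        + ω * γ * Real.sin (ω * t) / (2 * (1 - γ * Real.cos (ω * t)))))
    (w : ℝ → ℝ → ℝ → ℝ → ℝ)
    (hw : ∀ t x y z, w t x y z
      = -deriv (fun s => ∫ ζ in (zb s y)..z, u t s y ζ) x
        - deriv (fun s => ∫ ζ in (zb x s)..z, v t x s ζ) y)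
    (t x y : ℝ) (hr : 0 < x ^ 2 + y ^ 2)
    (hfpos : 0 < f ((x ^ 2 + y ^ 2) / (γ * Real.cos (ω * t) - 1)))
    (hdisc : 0 < 4 * g ^ 2 + c * ((x ^ 2 + y ^ 2) / (γ * Real.cos (ω * t) - 1))
      + β ^ 2 * α * g * (γ ^ 2 - 1) * ((x ^ 2 + y ^ 2) / (γ * Real.cos (ω * t) - 1)) ^ 2) :
    (∀ z, zb x y ≤ z → z ≤ zb x y + h t x y →
      -- (i) incompressibility
      (deriv (fun s => u t s y z) x + deriv (fun s => v t x s z) y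
        + deriv (fun s => w t x y s) z = 0) ∧
      -- (ii) horizontal momentum equations
      (deriv (fun s => u s x y z) t + u t x y z * deriv (fun s => u t s y z) x
        + v t x y z * deriv (fun s => u t x s z) y + w t x y z * deriv (fun s => u t x y s) z
        + g * deriv (fun s => h t s y + zb s y) x = 0) ∧
      (deriv (fun s => v s x y z) t + u t x y z * deriv (fun s => v t s y z) x
        + v t x y z * deriv (fun s => v t x s z) y + w t x y z * deriv (fun s => v t x y s) z
        + g * deriv (fun s => h t x s + zb x s) y = 0)) ∧
    -- (iii) kinematic free-surface condition
    (deriv (fun s => h s x y + zb x y) t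
      + u t x y (zb x y + h t x y) * deriv (fun s => h t s y + zb s y) x
      + v t x y (zb x y + h t x y) * deriv (fun s => h t x s + zb x s) y
      - w t x y (zb x y + h t x y) = 0) ∧
    -- (iii) bottom impermeability condition
    (w t x y (zb x y)
      = u t x y (zb x y) * deriv (fun s => zb s y) x
        + v t x y (zb x y) * deriv (fun s => zb x s) y) :=
  stmt13_general g α β γ c hg hα hβ hγ0 hγ1 ω hω zb hzb f hf h hh u v hu hv w hw t x y hr hfpos
    hdisc
end

section
/- Let t₀ ∈ ℝ, t₁ > 0, α > 0, β ≥ 0, θ ∈ ℝ, ν ≥ 0, g > 0, z_b(x,y) = z_{b,0} constant, and let p^{a,1} : ℝ → ℝ be a given function of time. Set f(t) := 1/(t − t₀ + t₁) and, for t ≥ t₀, define h(t,x,y) := α f(t), u(t,x,y,z) := β( (z − z_b) − (α/2) f(t) ) + f(t)( x cos²θ + y sin²θ ), v(t,x,y,z) := β( (z − z_b) − (α/2) f(t) ) + f(t)( x cos²θ + y sin²θ ), w(t,x,y,z) := f(t)( z_b − z ), p(t,x,y,z) := p^{a,1}(t) − 2ν f(t) + g( h − (z − z_b) ). Then, for all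 t ≥ t₀ and all (x,y,z): (i) ∂_x u + ∂_y v + ∂_z w = 0; (ii) ∂_z p = − g; (iii) ∂_t u + u ∂_x u + v ∂_y u + w ∂_z u = − ∂_x p + ν (∂_x² + ∂_y²) u + ν ∂_z² u, and the analogous equation holds for v; (iv) the kinematic free-surface condition ∂_t η + u ∂_x η + v ∂_y η − w = 0 holds at z = η := z_b + h, and w = 0 at z = z_b. -/
open Real

/-!
The fields are affine in space, so every second spatial derivative vanishes and the pressure,
whose horizontal gradient is zero, drops out of the momentum equations. What remains is
driven by the time profile `f t = 1 / (t - t₀ + t₁)`, which solves the Riccati equation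
`f' = -f²`: with `u = v` and `cos² θ + sin² θ = 1`, the advection term `u ∂ₓu + v ∂ᵧu = f u`
together with `w ∂_z u = β f (z_b - z)` exactly cancels `∂ₜu`, and at the free surface
`∂ₜh = -α f² = w`.
-/

theorem hasDerivAt_neg_sq_of_eq_one_div_sub_add {𝕜 : Type*} [NontriviallyNormedField 𝕜]
    {f : 𝕜 → 𝕜} {a b t : 𝕜} (hf : ∀ s, f s = 1 / (s - a + b)) (ht : t - a + b ≠ 0) :
    HasDerivAt f (-f t ^ 2) t := by
  obtain rfl : f = fun s => (s - a + b)⁻¹ := funext fun s => by rw [hf, one_div]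
  refine (((hasDerivAt_id' t).sub_const a).add_const b).fun_inv ht |>.congr_deriv ?_
  rw [neg_div, one_div, inv_pow]

theorem stmt14_general (t0 t1 α β θ ν g zb0 : ℝ)
    (ht1 : 0 < t1)
    (pa1 : ℝ → ℝ)
    (f : ℝ → ℝ) (hf : ∀ t, f t = 1 / (t - t0 + t1))
    (h : ℝ → ℝ → ℝ → ℝ) (hh : ∀ t x y, h t x y = α * f t)
    (u v w p : ℝ → ℝ → ℝ → ℝ → ℝ)
    (hu : ∀ t x y z, u t x y z
      = β * ((z - zb0) - α / 2 * f t) + f t * (x * Real.cos θ ^ 2 + y * Real.sin θ ^ 2))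
    (hv : ∀ t x y z, v t x y z
      = β * ((z - zb0) - α / 2 * f t) + f t * (x * Real.cos θ ^ 2 + y * Real.sin θ ^ 2))
    (hw : ∀ t x y z, w t x y z = f t * (zb0 - z))
    (hp : ∀ t x y z, p t x y z = pa1 t - 2 * ν * f t + g * (h t x y - (z - zb0))) :
    ∀ t, t0 ≤ t → ∀ x y z : ℝ,
      -- (i) incompressibility
      (deriv (fun s => u t s y z) x + deriv (fun s => v t x s z) y
        + deriv (fun s => w t x y s) z = 0) ∧
      -- (ii) hydrostatic pressure
      (deriv (fun s => p t x y s) z = -g) ∧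
      -- (iii) horizontal momentum equations
      (deriv (fun s => u s x y z) t + u t x y z * deriv (fun s => u t s y z) x
        + v t x y z * deriv (fun s => u t x s z) y + w t x y z * deriv (fun s => u t x y s) z
        = -deriv (fun s => p t s y z) x
          + ν * (deriv (fun s => deriv (fun r => u t r y z) s) x
            + deriv (fun s => deriv (fun r => u t x r z) s) y)
          + ν * deriv (fun s => deriv (fun r => u t x y r) s) z) ∧
      (deriv (fun s => v s x y z) t + u t x y z * deriv (fun s => v t s y z) x
        + v t x y z * deriv (fun s => v t x s z) y + w t x y z * deriv (fun s => v t x y s) z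
        = -deriv (fun s => p t x s z) y
          + ν * (deriv (fun s => deriv (fun r => v t r y z) s) x
            + deriv (fun s => deriv (fun r => v t x r z) s) y)
          + ν * deriv (fun s => deriv (fun r => v t x y r) s) z) ∧
      -- (iv) kinematic free-surface condition and bottom impermeability
      (deriv (fun s => h s x y + zb0) t
        + u t x y (zb0 + h t x y) * deriv (fun s => h t s y + zb0) x
        + v t x y (zb0 + h t x y) * deriv (fun s => h t x s + zb0) y
        - w t x y (zb0 + h t x y) = 0) ∧
      (w t x y zb0 = 0) := by
  intro t ht x y z
  obtain rfl : u = v := by funext t x y z; rw [hu, hv]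
  have hf' : HasDerivAt f (-f t ^ 2) t :=
    hasDerivAt_neg_sq_of_eq_one_div_sub_add hf (by linarith)
  have hu_t : deriv (fun s => u s x y z) t
      = f t ^ 2 * (β * (α / 2) - (x * cos θ ^ 2 + y * sin θ ^ 2)) := by
    simp only [hu]
    exact ((((hf'.const_mul (α / 2)).const_sub _).const_mul β).add (hf'.mul_const _)).deriv.trans
      (by ring)
  have hh_t : deriv (fun s => h s x y + zb0) t = -α * f t ^ 2 := by
    simp only [hh]
    exact ((hf'.const_mul α).add_const zb0).deriv.trans (by ring)
  rw [hu_t, hh_t]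
  refine ⟨?_, ?_, ?_, ?_, ?_, ?_⟩ <;> simp [hu, hw, hp, hh, sin_sq] <;> ring

/-- the 'draining of a tank' analytical solution of the 3d
incompressible hydrostatic Navier-Stokes system with free surface. -/
theorem stmt14 (t0 t1 α β θ ν g zb0 : ℝ)
    (ht1 : 0 < t1) (hα : 0 < α) (hβ : 0 ≤ β) (hν : 0 ≤ ν) (hg : 0 < g)
    (pa1 : ℝ → ℝ)
    (f : ℝ → ℝ) (hf : ∀ t, f t = 1 / (t - t0 + t1))
    (h : ℝ → ℝ → ℝ → ℝ) (hh : ∀ t x y, h t x y = α * f t)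
    (u v w p : ℝ → ℝ → ℝ → ℝ → ℝ)
    (hu : ∀ t x y z, u t x y z
      = β * ((z - zb0) - α / 2 * f t) + f t * (x * Real.cos θ ^ 2 + y * Real.sin θ ^ 2))
    (hv : ∀ t x y z, v t x y z
      = β * ((z - zb0) - α / 2 * f t) + f t * (x * Real.cos θ ^ 2 + y * Real.sin θ ^ 2))
    (hw : ∀ t x y z, w t x y z = f t * (zb0 - z))
    (hp : ∀ t x y z, p t x y z = pa1 t - 2 * ν * f t + g * (h t x y - (z - zb0))) :
    ∀ t, t0 ≤ t → ∀ x y z : ℝ,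
      -- (i) incompressibility
      (deriv (fun s => u t s y z) x + deriv (fun s => v t x s z) y
        + deriv (fun s => w t x y s) z = 0) ∧
      -- (ii) hydrostatic pressure
      (deriv (fun s => p t x y s) z = -g) ∧
      -- (iii) horizontal momentum equations
      (deriv (fun s => u s x y z) t + u t x y z * deriv (fun s => u t s y z) x
        + v t x y z * deriv (fun s => u t x s z) y + w t x y z * deriv (fun s => u t x y s) z
        = -deriv (fun s => p t s y z) x
          + ν * (deriv (fun s => deriv (fun r => u t r y z) s) x
            + deriv (fun s => deriv (fun r => u t x r z) s) y)
          + ν * deriv (fun s => deriv (fun r => u t x y r) s) z) ∧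
      (deriv (fun s => v s x y z) t + u t x y z * deriv (fun s => v t s y z) x
        + v t x y z * deriv (fun s => v t x s z) y + w t x y z * deriv (fun s => v t x y s) z
        = -deriv (fun s => p t x s z) y
          + ν * (deriv (fun s => deriv (fun r => v t r y z) s) x
            + deriv (fun s => deriv (fun r => v t x r z) s) y)
          + ν * deriv (fun s => deriv (fun r => v t x y r) s) z) ∧
      -- (iv) kinematic free-surface condition and bottom impermeability
      (deriv (fun s => h s x y + zb0) t
        + u t x y (zb0 + h t x y) * deriv (fun s => h t s y + zb0) x
        + v t x y (zb0 + h t x y) * deriv (fun s => h t x s + zb0) y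
        - w t x y (zb0 + h t x y) = 0) ∧
      (w t x y zb0 = 0) :=
  stmt14_general t0 t1 α β θ ν g zb0 ht1 pa1 f hf h hh u v w p hu hv hw hp
end

section
/- Let g > 0, α, β ∈ ℝ with β ≠ 0, z̄_b ∈ ℝ, and let h₀ : ℝ → ℝ be C¹ with 0 < β h₀(x) < π for all x (so sin(β h₀(x)) > 0). Define z_b(x) := z̄_b − h₀(x) − α²β²/(2g sin²(β h₀(x))), η(x) := z_b(x) + h₀(x), u(x,z) := α β cos(β (z − z_b(x))) / sin(β h₀(x)), v := 0, and w(x,z) := α β ( z_b'(x) cos(β(z − z_b(x)))/sin(β h₀(x)) + h₀'(x) sin(β(z − z_b(x))) cos(β h₀(x))/sin²(β h₀(x)) ). Then, for all x and all z with z_b(x) ≤ z ≤ η(x): (i) ∂_x u + ∂_z w = 0; (ii) u ∂_x u + w ∂_z u + g ∂_x η = 0; (iii) w = u z_b'(x) at z = z_b(x), and u ∂_x η = w at z = η(x). Hence (h₀, u, v, w) is a stationary solution of the incompressible hydrostatic Euler system with free surface (with zero atmospheric pressure) that is independent of y. -/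
/-!
With `θ = β (z - z_b)`, both `u` and `w` are combinations of `cos θ` and `sin θ`, so each
derivative in `z` swaps the two. `w` is `-∫ ∂ₓu dz` normalised by the bottom condition, which
gives incompressibility and impermeability; at the surface `θ = β h₀`, which gives the kinematic
condition. In the momentum equation `sin² θ + cos² θ = 1` makes the advection term independent
of `z`, hence equal to `u_b ∂ₓu_b` for the bottom velocity `u_b = αβ / sin (β h₀)`. The bottom
`z_b` is chosen so that `η + u_b² / 2g = z̄_b` (Bernoulli), and differentiating this gives
`g ∂ₓη = -u_b ∂ₓu_b`.
-/

open Real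

lemma hasDerivAt_bottom_topography {h0 : ℝ → ℝ} {g α β zbbar x D : ℝ} (hg : g ≠ 0)
    (hh0 : HasDerivAt h0 D x) (hS : sin (β * h0 x) ≠ 0) :
    HasDerivAt (fun s => zbbar - h0 s - α ^ 2 * β ^ 2 / (2 * g * sin (β * h0 s) ^ 2))
      (-D + α ^ 2 * β ^ 3 * D * cos (β * h0 x) / (g * sin (β * h0 x) ^ 3)) x := by
  have hden := ((hh0.const_mul β).sin.pow 2).const_mul (2 * g)
  refine (((hasDerivAt_const x zbbar).sub hh0).sub
    ((hasDerivAt_const x (α ^ 2 * β ^ 2)).div hden (by simp [hg, hS]))).congr_deriv ?_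
  simp only [Pi.pow_apply]
  field_simp
  ring

lemma hasDerivAt_cos_sub_div_sin {h0 zb : ℝ → ℝ} {β z x Z D : ℝ}
    (hzb : HasDerivAt zb Z x) (hh0 : HasDerivAt h0 D x) (hS : sin (β * h0 x) ≠ 0) :
    HasDerivAt (fun s => cos (β * (z - zb s)) / sin (β * h0 s))
      (β * (Z * sin (β * (z - zb x)) / sin (β * h0 x)
        - D * cos (β * h0 x) * cos (β * (z - zb x)) / sin (β * h0 x) ^ 2)) x := by
  have hθ := ((hasDerivAt_const x z).sub hzb).const_mul β
  refine (hθ.cos.div (hh0.const_mul β).sin hS).congr_deriv ?_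
  simp only [Pi.sub_apply]
  field_simp
  ring

lemma hasDerivAt_cos_sin_sub (a b β c z : ℝ) :
    HasDerivAt (fun s => a * cos (β * (s - c)) + b * sin (β * (s - c)))
      (β * (b * cos (β * (z - c)) - a * sin (β * (z - c)))) z := by
  have hθ := ((hasDerivAt_id z).sub_const c).const_mul β
  refine ((hθ.cos.const_mul a).add (hθ.sin.const_mul b)).congr_deriv ?_
  simp only [id]
  ring

theorem stmt15_general (g α β zbbar : ℝ) (hg : 0 < g)
    (h0 : ℝ → ℝ) (hh0C1 : ContDiff ℝ 1 h0)
    (hh0 : ∀ x, 0 < β * h0 x ∧ β * h0 x < Real.pi)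
    (zb : ℝ → ℝ)
    (hzb : ∀ x, zb x = zbbar - h0 x - α ^ 2 * β ^ 2 / (2 * g * Real.sin (β * h0 x) ^ 2))
    (η : ℝ → ℝ) (hη : ∀ x, η x = zb x + h0 x)
    (u : ℝ → ℝ → ℝ)
    (hu : ∀ x z, u x z = α * β * Real.cos (β * (z - zb x)) / Real.sin (β * h0 x))
    (w : ℝ → ℝ → ℝ)
    (hw : ∀ x z, w x z
      = α * β * (deriv zb x * Real.cos (β * (z - zb x)) / Real.sin (β * h0 x)
        + deriv h0 x * Real.sin (β * (z - zb x)) * Real.cos (β * h0 x)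
            / Real.sin (β * h0 x) ^ 2)) :
    ∀ x z : ℝ, zb x ≤ z → z ≤ η x →
      -- (i) incompressibility
      (deriv (fun s => u s z) x + deriv (fun s => w x s) z = 0) ∧
      -- (ii) stationary horizontal momentum equation
      (u x z * deriv (fun s => u s z) x + w x z * deriv (fun s => u x s) z
        + g * deriv η x = 0) ∧
      -- (iii) bottom impermeability and kinematic free-surface conditions
      (w x (zb x) = u x (zb x) * deriv zb x) ∧
      (u x (η x) * deriv η x = w x (η x)) := by
  intro x z _ _
  have hh0x : HasDerivAt h0 (deriv h0 x) x := (hh0C1.differentiable one_ne_zero x).hasDerivAt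
  have hS : sin (β * h0 x) ≠ 0 := (sin_pos_of_pos_of_lt_pi (hh0 x).1 (hh0 x).2).ne'
  have hzb_deriv :=
    funext hzb ▸ hasDerivAt_bottom_topography (zbbar := zbbar) (α := α) hg.ne' hh0x hS
  have hzbx : HasDerivAt zb (deriv zb x) x := hzb_deriv.differentiableAt.hasDerivAt
  have hηx : deriv η x = deriv zb x + deriv h0 x := by
    rw [funext hη]; exact (hzbx.add hh0x).deriv
  have hu_x : (fun s => u s z) = fun s => α * β * (cos (β * (z - zb s)) / sin (β * h0 s)) :=
    funext fun s => by rw [hu, mul_div_assoc]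
  have hu_z : (fun s => u x s) = fun s => α * β / sin (β * h0 x) * cos (β * (s - zb x))
      + 0 * sin (β * (s - zb x)) :=
    funext fun s => by rw [hu]; ring
  have hw_z : (fun s => w x s) = fun s =>
      α * β * deriv zb x / sin (β * h0 x) * cos (β * (s - zb x))
      + α * β * deriv h0 x * cos (β * h0 x) / sin (β * h0 x) ^ 2 * sin (β * (s - zb x)) :=
    funext fun s => by rw [hw]; ring
  rw [hu_x, ((hasDerivAt_cos_sub_div_sin hzbx hh0x hS).const_mul (α * β)).deriv,
    hu_z, (hasDerivAt_cos_sin_sub _ _ β (zb x) z).deriv,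
    hw_z, (hasDerivAt_cos_sin_sub _ _ β (zb x) z).deriv, hηx]
  simp only [hu, hw]
  refine ⟨by ring, ?_, ?_, ?_⟩
  · rw [hzb_deriv.deriv]
    field_simp
    linear_combination -(deriv h0 x * α ^ 2 * β ^ 3 * sin (β * h0 x) ^ 2 * g * cos (β * h0 x)) *
      sin_sq_add_cos_sq (β * (z - zb x))
  · simp only [sub_self, mul_zero, cos_zero, mul_one, sin_zero, zero_mul, zero_div, add_zero]
    ring
  · rw [hη, add_sub_cancel_left]
    field_simp

/-- the stationary analytical solution of the incompressible
hydrostatic Euler system with free surface. -/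
theorem stmt15 (g α β zbbar : ℝ) (hg : 0 < g) (hβ : β ≠ 0)
    (h0 : ℝ → ℝ) (hh0C1 : ContDiff ℝ 1 h0)
    (hh0 : ∀ x, 0 < β * h0 x ∧ β * h0 x < Real.pi)
    (zb : ℝ → ℝ)
    (hzb : ∀ x, zb x = zbbar - h0 x - α ^ 2 * β ^ 2 / (2 * g * Real.sin (β * h0 x) ^ 2))
    (η : ℝ → ℝ) (hη : ∀ x, η x = zb x + h0 x)
    (u : ℝ → ℝ → ℝ)
    (hu : ∀ x z, u x z = α * β * Real.cos (β * (z - zb x)) / Real.sin (β * h0 x))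
    (w : ℝ → ℝ → ℝ)
    (hw : ∀ x z, w x z
      = α * β * (deriv zb x * Real.cos (β * (z - zb x)) / Real.sin (β * h0 x)
        + deriv h0 x * Real.sin (β * (z - zb x)) * Real.cos (β * h0 x)
            / Real.sin (β * h0 x) ^ 2)) :
    ∀ x z : ℝ, zb x ≤ z → z ≤ η x →
      -- (i) incompressibility
      (deriv (fun s => u s z) x + deriv (fun s => w x s) z = 0) ∧
      -- (ii) stationary horizontal momentum equation
      (u x z * deriv (fun s => u s z) x + w x z * deriv (fun s => u x s) z
        + g * deriv η x = 0) ∧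
      -- (iii) bottom impermeability and kinematic free-surface conditions
      (w x (zb x) = u x (zb x) * deriv zb x) ∧
      (u x (η x) * deriv η x = w x (η x)) :=
  stmt15_general g α β zbbar hg h0 hh0C1 hh0 zb hzb η hη u hu w hw
end

section
/- Consider one cell i of the kinetic finite-volume scheme with hydrostatic reconstruction: let K be a finite set of neighbor indices, with edge lengths L_j > 0, unit normal vectors n_j ∈ ℝ² satisfying the closure relation Σ_{j∈K} L_j n_j = 0, cell area |C| > 0, and time step Δt > 0. Let g > 0, N ≥ 1, l_1,…,l_N ∈ (0,1] with Σ l_α = 1, and let the data be at rest: u_{α,i} = v_{α,i} = 0 and u_{α,j} = v_{α,j} = 0 for all layers α and all j ∈ K, water depths h_i ≥ 0, h_j ≥ 0, and bottom values z_{b,i}, z_{b,j} with h_i + z_{b,i} = h_j + z_{b,j} for every j ∈ K. Define M_{α,i}(ξ,γ) := (l_α/(2gπ)) 𝟙_{ξ²+γ²≤2gh_i}, and for each j ∈ K the hydrostatically reconstructed states z*_{b,ij} := max(z_{b,i}, z_{b,j}), h*_{ij} := max(h_i + z_{b,i} − z*_{b,ij}, 0), h*_{ji} := max(h_j + z_{b,j}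 − z*_{b,ij}, 0), with Maxwellians M*_{α,ij}(ξ,γ) := (l_α/(2gπ)) 𝟙_{ξ²+γ²≤2gh*_{ij}} and M*_{α,ji}(ξ,γ) := (l_α/(2gπ)) 𝟙_{ξ²+γ²≤2gh*_{ji}}. Set ζ_j := (ξ, γ)·n_j, θ_{α,j} := (ξ − u_{α,i}, γ − v_{α,i})·n_j = ζ_j, and define the kinetic update f^{n+1/2−}_{α,i}(ξ,γ) := M_{α,i} − (Δt/|C|) Σ_{j∈K} L_j [ ζ_j 𝟙_{ζ_j≥0} M*_{α,ij} + ζ_j 𝟙_{ζ_j≤0} M*_{α,ji} + (M_{α,i} − M*_{α,ij}) θ_{α,j} ]. Then: (i) f^{n+1/2−}_{α,i}(ξ,γ) = M_{α,i}(ξ,γ) for all (ξ,γ) ∈ ℝ² and all α; and (ii) the interface mass-exchange terms G*_{α+1/2,i} := −(1/|C|) Σ_{k=1}^N ( Σ_{p=1}^α l_p − 𝟙_{k≤α} ) Σ_{j∈K} L_j ∫_{ℝ²} ( M*_{k,ij} ζ_j 𝟙_{ζ_j≥0} + M*_{k,ij} ζ_j 𝟙_{ζ_j≤0} ) dξ dγ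 all vanish, so the full kinetic update satisfies f^{n+1−}_{α,i} = M_{α,i}: the scheme is kinetic well-balanced at the lake at rest. -/
open MeasureTheory Real

lemma odd_integral_zero (f : ℝ × ℝ → ℝ) (hf : ∀ p, f (-p) = -f p) :
    ∫ p : ℝ × ℝ, f p = 0 := by
  have h1 : ∫ p : ℝ × ℝ, f (-p) = ∫ p : ℝ × ℝ, f p :=
    MeasureTheory.integral_neg_eq_self f volume
  have h2 : ∫ p : ℝ × ℝ, f (-p) = -∫ p : ℝ × ℝ, f p := by
    simp only [hf]; exact integral_neg f
  linarith

/-- the kinetic interpretation of the hydrostatic reconstruction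
scheme is well-balanced at the lake at rest. -/
theorem stmt19
    (ι : Type) (K : Finset ι)
    (L : ι → ℝ) (hL : ∀ j ∈ K, 0 < L j)
    (n : ι → ℝ × ℝ) (hn : ∀ j ∈ K, (n j).1 ^ 2 + (n j).2 ^ 2 = 1)
    (hclose : ∑ j ∈ K, L j • n j = 0)
    (C : ℝ) (hC : 0 < C) (Δt : ℝ) (hΔt : 0 < Δt)
    (g : ℝ) (hg : 0 < g) (N : ℕ) (hN : 1 ≤ N)
    (l : ℕ → ℝ) (hl : ∀ α ∈ Finset.Icc 1 N, 0 < l α ∧ l α ≤ 1)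
    (hlsum : ∑ α ∈ Finset.Icc 1 N, l α = 1)
    -- data at rest: all velocities vanish
    (u v : ℕ → ℝ) (hu : ∀ α, u α = 0) (hv : ∀ α, v α = 0)
    (uN vN : ι → ℕ → ℝ) (huN : ∀ j α, uN j α = 0) (hvN : ∀ j α, vN j α = 0)
    (hi : ℝ) (hhi : 0 ≤ hi) (hj : ι → ℝ) (hhj : ∀ j ∈ K, 0 ≤ hj j)
    (zbi : ℝ) (zbj : ι → ℝ)
    -- lake at rest: flat free surface
    (hrest : ∀ j ∈ K, hi + zbi = hj j + zbj j)
    (M : ℕ → ℝ → ℝ → ℝ)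
    (hM : ∀ α ξ γ, M α ξ γ = (l α / (2 * g * Real.pi)) *
        (if (ξ - u α) ^ 2 + (γ - v α) ^ 2 ≤ 2 * g * hi then (1 : ℝ) else 0))
    -- hydrostatically reconstructed states
    (zbs : ι → ℝ) (hzbs : ∀ j, zbs j = max zbi (zbj j))
    (hsij : ι → ℝ) (hhsij : ∀ j, hsij j = max (hi + zbi - zbs j) 0)
    (hsji : ι → ℝ) (hhsji : ∀ j, hsji j = max (hj j + zbj j - zbs j) 0)
    (Msij : ℕ → ι → ℝ → ℝ → ℝ)
    (hMsij : ∀ α j ξ γ, Msij α j ξ γ = (l α / (2 * g * Real.pi)) *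
        (if (ξ - u α) ^ 2 + (γ - v α) ^ 2 ≤ 2 * g * hsij j then (1 : ℝ) else 0))
    (Msji : ℕ → ι → ℝ → ℝ → ℝ)
    (hMsji : ∀ α j ξ γ, Msji α j ξ γ = (l α / (2 * g * Real.pi)) *
        (if (ξ - uN j α) ^ 2 + (γ - vN j α) ^ 2 ≤ 2 * g * hsji j then (1 : ℝ) else 0))
    (ζ : ι → ℝ → ℝ → ℝ) (hζ : ∀ j ξ γ, ζ j ξ γ = ξ * (n j).1 + γ * (n j).2)
    (θ : ℕ → ι → ℝ → ℝ → ℝ)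
    (hθ : ∀ α j ξ γ, θ α j ξ γ = (ξ - u α) * (n j).1 + (γ - v α) * (n j).2)
    -- the kinetic update
    (fhalf : ℕ → ℝ → ℝ → ℝ)
    (hfhalf : ∀ α ξ γ, fhalf α ξ γ = M α ξ γ - (Δt / C) * ∑ j ∈ K, L j *
        (ζ j ξ γ * (if 0 ≤ ζ j ξ γ then (1 : ℝ) else 0) * Msij α j ξ γ
          + ζ j ξ γ * (if ζ j ξ γ ≤ 0 then (1 : ℝ) else 0) * Msji α j ξ γ
          + (M α ξ γ - Msij α j ξ γ) * θ α j ξ γ))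
    -- the interface mass-exchange terms
    (Gs : ℕ → ℝ)
    (hGs : ∀ α, Gs α = -(1 / C) * ∑ k ∈ Finset.Icc 1 N,
        ((∑ p ∈ Finset.Icc 1 α, l p) - (if k ≤ α then (1 : ℝ) else 0)) *
          ∑ j ∈ K, L j * ∫ p : ℝ × ℝ,
            (Msij k j p.1 p.2 * ζ j p.1 p.2 * (if 0 ≤ ζ j p.1 p.2 then (1 : ℝ) else 0)
              + Msij k j p.1 p.2 * ζ j p.1 p.2 * (if ζ j p.1 p.2 ≤ 0 then (1 : ℝ) else 0))) :
    -- (i) the half-step kinetic update leaves the Maxwellians unchanged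
    (∀ α ∈ Finset.Icc 1 N, ∀ ξ γ : ℝ, fhalf α ξ γ = M α ξ γ) ∧
    -- (ii) all interface mass-exchange terms vanish
    (∀ α, α ≤ N → Gs α = 0) ∧
    -- so the full kinetic update satisfies `f^{n+1-} = M`
    (∀ fnp1 fint : ℕ → ℝ → ℝ → ℝ,
      (∀ α ∈ Finset.Icc 1 N, ∀ ξ γ : ℝ,
        fnp1 α ξ γ = fhalf α ξ γ
          + Δt * ((Gs α / hi) * fint α ξ γ - (Gs (α - 1) / hi) * fint (α - 1) ξ γ)) →
      ∀ α ∈ Finset.Icc 1 N, ∀ ξ γ : ℝ, fnp1 α ξ γ = M α ξ γ) := by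
  have hs_eq : ∀ j ∈ K, hsji j = hsij j := by
    intro j hjK
    rw [hhsji, hhsij, hrest j hjK]
  have h1c : ∑ j ∈ K, L j * (n j).1 = 0 := by
    have := congrArg Prod.fst hclose
    rw [Prod.fst_sum] at this
    simpa [smul_eq_mul] using this
  have h2c : ∑ j ∈ K, L j * (n j).2 = 0 := by
    have := congrArg Prod.snd hclose
    rw [Prod.snd_sum] at this
    simpa [smul_eq_mul] using this
  have key1 : ∀ α ∈ Finset.Icc 1 N, ∀ ξ γ : ℝ, fhalf α ξ γ = M α ξ γ := by
    intro α hα ξ γ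
    rw [hfhalf]
    have hterm : ∀ j ∈ K,
        L j * (ζ j ξ γ * (if 0 ≤ ζ j ξ γ then (1 : ℝ) else 0) * Msij α j ξ γ
          + ζ j ξ γ * (if ζ j ξ γ ≤ 0 then (1 : ℝ) else 0) * Msji α j ξ γ
          + (M α ξ γ - Msij α j ξ γ) * θ α j ξ γ)
        = (M α ξ γ * ξ) * (L j * (n j).1) + (M α ξ γ * γ) * (L j * (n j).2) := by
      intro j hjK
      have hMs : Msji α j ξ γ = Msij α j ξ γ := by
        rw [hMsji, hMsij, huN, hvN, hu, hv, hs_eq j hjK]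
      have hθ' : θ α j ξ γ = ζ j ξ γ := by
        rw [hθ, hζ, hu, hv]; ring
      rw [hMs, hθ']
      rcases lt_trichotomy (ζ j ξ γ) 0 with hz | hz | hz
      · rw [if_neg (not_le.mpr hz), if_pos hz.le, hζ] at *
        ring
      · have h0 : ξ * (n j).1 + γ * (n j).2 = 0 := by rw [hζ] at hz; exact hz
        rw [hz]
        linear_combination (-(M α ξ γ * L j)) * h0
      · rw [if_pos hz.le, if_neg (not_le.mpr hz), hζ] at *
        ring
    rw [Finset.sum_congr rfl hterm, Finset.sum_add_distrib, ← Finset.mul_sum,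
      ← Finset.mul_sum, h1c, h2c]
    ring
  have key2 : ∀ α : ℕ, Gs α = 0 := by
    intro α
    rw [hGs]
    have hint : ∀ k j, (∫ p : ℝ × ℝ,
        (Msij k j p.1 p.2 * ζ j p.1 p.2 * (if 0 ≤ ζ j p.1 p.2 then (1 : ℝ) else 0)
          + Msij k j p.1 p.2 * ζ j p.1 p.2 * (if ζ j p.1 p.2 ≤ 0 then (1 : ℝ) else 0))) = 0 := by
      intro k j
      apply odd_integral_zero
      intro p
      simp only [hMsij, hζ, hu, hv, Prod.fst_neg, Prod.snd_neg, sub_zero, neg_sq]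
      have hz : -p.1 * (n j).1 + -p.2 * (n j).2 = -(p.1 * (n j).1 + p.2 * (n j).2) := by ring
      rw [hz]
      simp only [neg_nonneg, neg_nonpos]
      ring
    have : ∀ k ∈ Finset.Icc 1 N,
        ((∑ p ∈ Finset.Icc 1 α, l p) - (if k ≤ α then (1 : ℝ) else 0)) *
          ∑ j ∈ K, L j * (∫ p : ℝ × ℝ,
            (Msij k j p.1 p.2 * ζ j p.1 p.2 * (if 0 ≤ ζ j p.1 p.2 then (1 : ℝ) else 0)
              + Msij k j p.1 p.2 * ζ j p.1 p.2 * (if ζ j p.1 p.2 ≤ 0 then (1 : ℝ) else 0))) = 0 := by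
      intro k _
      have : ∀ j ∈ K, L j * (∫ p : ℝ × ℝ,
            (Msij k j p.1 p.2 * ζ j p.1 p.2 * (if 0 ≤ ζ j p.1 p.2 then (1 : ℝ) else 0)
              + Msij k j p.1 p.2 * ζ j p.1 p.2 * (if ζ j p.1 p.2 ≤ 0 then (1 : ℝ) else 0))) = 0 := by
        intro j _
        rw [hint k j, mul_zero]
      rw [Finset.sum_congr rfl this, Finset.sum_const, smul_zero, mul_zero]
    rw [Finset.sum_congr rfl this, Finset.sum_const, smul_zero, mul_zero]
  refine ⟨key1, fun α _ => key2 α, ?_⟩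
  intro fnp1 fint hfn α hα ξ γ
  rw [hfn α hα ξ γ, key1 α hα, key2 α, key2 (α - 1)]
  simp
end
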